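/- arXiv:2501.00441 — 3 statements merged into one kernel-verified Lean document; each statement's English description precedes it below -/
import Mathlib

section
/- Define h : [0,2] → [0,1] by h(x) = x^α for x ∈ [0,1] and h(x) = c(2−x) for x ∈ (1,2], where α = log 2/log 3 and c is the Cantor function. Then h is continuous, not absolutely continuous, and its minimal modulus of continuity is ω_h(δ) = δ^α for δ ∈ [0,1] and ω_h(δ) = 1 for δ ∈ (1,2], which is absolutely continuous. -/
noncomputable def modCont (f : ℝ → ℝ) (a b : ℝ) (δ : ℝ) : ℝ :=
  sSup {d : ℝ | ∃ x ∈ Set.Icc a b, ∃ y ∈ Set.Icc a b, |x - y| ≤ δ ∧ d = |f x - f y|}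

def AbsolutelyContinuousOn (g : ℝ → ℝ) (a b : ℝ) : Prop :=
  ∀ ε > (0:ℝ), ∃ δ > (0:ℝ), ∀ n : ℕ, ∀ x y : ℕ → ℝ,
    (∀ i < n, a ≤ x i ∧ x i ≤ y i ∧ y i ≤ b) →
    (∀ i < n, ∀ j < n, i ≠ j → Disjoint (Set.Ioo (x i) (y i)) (Set.Ioo (x j) (y j))) →
    (∑ i ∈ Finset.range n, (y i - x i)) < δ →
    (∑ i ∈ Finset.range n, |g (y i) - g (x i)|) < ε

/-- The standard Cantor function is the unique monotone function on `[0,1]` with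
`c 0 = 0`, `c 1 = 1`, satisfying the self-similarity relations
`c (x/3) = c x / 2` and `c ((x+2)/3) = (1 + c x)/2`. -/
def IsCantorFunction (c : ℝ → ℝ) : Prop :=
  MonotoneOn c (Set.Icc 0 1) ∧ c 0 = 0 ∧ c 1 = 1 ∧
  (∀ x ∈ Set.Icc (0:ℝ) 1, c (x / 3) = c x / 2) ∧
  (∀ x ∈ Set.Icc (0:ℝ) 1, c ((x + 2) / 3) = (1 + c x) / 2)

noncomputable def cantorAlpha : ℝ := Real.log 2 / Real.log 3

noncomputable def paperH (c : ℝ → ℝ) (x : ℝ) : ℝ :=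
  if x ≤ 1 then x ^ cantorAlpha else c (2 - x)

open Real Set
local notation "α" => cantorAlpha

lemma alpha_pos : 0 < cantorAlpha :=
  div_pos (Real.log_pos (by norm_num)) (Real.log_pos (by norm_num))

lemma alpha_lt_one : cantorAlpha < 1 := by
  rw [cantorAlpha, div_lt_one (Real.log_pos (by norm_num))]
  exact Real.log_lt_log (by norm_num) (by norm_num)

lemma three_rpow : (3:ℝ) ^ cantorAlpha = 2 := by
  rw [cantorAlpha, Real.rpow_def_of_pos (by norm_num : (0:ℝ) < 3)]
  rw [mul_div_assoc', mul_comm, mul_div_assoc, div_self (by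
    exact Real.log_ne_zero_of_pos_of_ne_one (by norm_num : (0:ℝ) < 3) (by norm_num)), mul_one,
    Real.exp_log (by norm_num)]

lemma rpow_triple {t : ℝ} (ht : 0 ≤ t) : (3 * t) ^ α = 2 * t ^ α := by
  rw [Real.mul_rpow (by norm_num) ht, three_rpow]

lemma rpow_third {t : ℝ} (ht : 0 ≤ t) : (t / 3) ^ α = t ^ α / 2 := by
  rw [Real.div_rpow ht (by norm_num), three_rpow]

lemma concaveIncr {a b d : ℝ} (ha : 0 ≤ a) (hab : a ≤ b) (hd : 0 ≤ d) :
    (b + d) ^ α - b ^ α ≤ (a + d) ^ α - a ^ α := by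
  rcases eq_or_lt_of_le (le_trans hab (le_add_of_nonneg_right hd) : a ≤ b + d)
    with h | h
  · have h1 : a = b := le_antisymm hab (by linarith)
    have h2 : d = 0 := by linarith
    simp only [h1, h2, add_zero, le_refl]
  · have hden : 0 < b + d - a := by linarith
    set l : ℝ := d / (b + d - a) with hl
    set m : ℝ := (b - a) / (b + d - a) with hm
    have hl0 : 0 ≤ l := div_nonneg hd hden.le
    have hm0 : 0 ≤ m := div_nonneg (by linarith) hden.le
    have hlm : l + m = 1 := by rw [hl, hm, ← add_div, div_eq_one_iff_eq hden.ne']; ring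
    have hcon := Real.concaveOn_rpow alpha_pos.le alpha_lt_one.le
    have h1 := hcon.2 (mem_Ici.2 ha) (mem_Ici.2 (by linarith : (0:ℝ) ≤ b + d))
      hm0 hl0 (by linarith)
    have h2 := hcon.2 (mem_Ici.2 ha) (mem_Ici.2 (by linarith : (0:ℝ) ≤ b + d))
      hl0 hm0 hlm
    have e1 : m • a + l • (b + d) = a + d := by
      simp only [smul_eq_mul, hl, hm]; field_simp; ring
    have e2 : l • a + m • (b + d) = b := by
      simp only [smul_eq_mul, hl, hm]; field_simp; ring
    rw [e1] at h1
    rw [e2] at h2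
    simp only [smul_eq_mul] at h1 h2
    have key : m * a ^ α + l * (b + d) ^ α + (l * a ^ α + m * (b + d) ^ α)
        = a ^ α + (b + d) ^ α := by linear_combination (a ^ α + (b + d) ^ α) * hlm
    linarith [h1, h2, key]

lemma rpow_subadd {x y : ℝ} (hx : 0 ≤ x) (hy : 0 ≤ y) : (x + y) ^ α ≤ x ^ α + y ^ α := by
  have := concaveIncr (le_refl 0) hx hy
  simp only [zero_add, Real.zero_rpow (ne_of_gt alpha_pos), sub_zero] at this
  linarith

lemma rpow_holder {x y : ℝ} (hy : 0 ≤ y) (hxy : y ≤ x) : x ^ α - y ^ α ≤ (x - y) ^ α := by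
  have := rpow_subadd hy (by linarith : (0:ℝ) ≤ x - y)
  have e : y + (x - y) = x := by ring
  rw [e] at this; linarith

lemma keyIneq {s t : ℝ} (hs : s ∈ Icc (0:ℝ) 1) (ht : t ∈ Icc (0:ℝ) 1) :
    s ^ α + t ^ α ≤ (s + t + 1) ^ α := by
  have h1 : ((1:ℝ) + (t + 1)) ^ α - 1 ^ α ≤ (s + (t + 1)) ^ α - s ^ α :=
    concaveIncr hs.1 hs.2 (by linarith [ht.1])
  have h2 : ((1:ℝ) + 2) ^ α - 1 ^ α ≤ (t + 2) ^ α - t ^ α :=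
    concaveIncr ht.1 ht.2 (by norm_num)
  have h3 : ((1:ℝ) + 2) ^ α = 2 := by norm_num [three_rpow]
  rw [Real.one_rpow] at h1 h2
  have e1 : s + (t + 1) = s + t + 1 := by ring
  have e2 : (1:ℝ) + (t + 1) = t + 2 := by ring
  rw [e1, e2] at h1
  linarith

section Cantor

variable {c : ℝ → ℝ}
  (hmono : MonotoneOn c (Set.Icc 0 1)) (h0 : c 0 = 0) (h1 : c 1 = 1)
  (hs1 : ∀ x ∈ Set.Icc (0:ℝ) 1, c (x / 3) = c x / 2)
  (hs2 : ∀ x ∈ Set.Icc (0:ℝ) 1, c ((x + 2) / 3) = (1 + c x) / 2)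

include hmono h0 h1 in
lemma cmem : ∀ v ∈ Icc (0:ℝ) 1, c v ∈ Icc (0:ℝ) 1 := by
  intro v hv
  constructor
  · rw [← h0]; exact hmono (by norm_num) hv hv.1
  · rw [← h1]; exact hmono hv (by norm_num) hv.2

include h1 hs1 in
lemma cthird : c (1/3 : ℝ) = 1/2 := by
  have := hs1 1 (by norm_num)
  rw [h1] at this; norm_num at this ⊢; exact this

include h0 hs2 in
lemma c2third : c (2/3 : ℝ) = 1/2 := by
  have := hs2 0 (by norm_num)
  rw [h0] at this; norm_num at this ⊢; exact this

include hmono h0 h1 hs1 hs2 in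
lemma cmid : ∀ v ∈ Icc (1/3 : ℝ) (2/3 : ℝ), c v = 1/2 := by
  intro v hv
  have l1 : c (1/3 : ℝ) ≤ c v := hmono (by norm_num) (by constructor <;> linarith [hv.1, hv.2]) hv.1
  have l2 : c v ≤ c (2/3 : ℝ) := hmono (by constructor <;> linarith [hv.1, hv.2]) (by norm_num) hv.2
  rw [cthird h1 hs1] at l1; rw [c2third h0 hs2] at l2; linarith

lemma third_rpow : (1/3 : ℝ) ^ α = 1/2 := by
  rw [rpow_third (by norm_num : (0:ℝ) ≤ 1), Real.one_rpow]

lemma one_add_rpow {w : ℝ} (hw : w ∈ Icc (0:ℝ) 1) : 1 + w ^ α ≤ (w + 2) ^ α := by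
  have := keyIneq hw (by norm_num : (1:ℝ) ∈ Icc (0:ℝ) 1)
  rw [Real.one_rpow] at this
  have e : (w + 1 + 1 : ℝ) = w + 2 := by ring
  rw [e] at this
  linarith

include hmono h0 h1 hs1 hs2 in
lemma lemA : ∀ v ∈ Icc (0:ℝ) 1, c v ≤ v ^ α := by
  have main : ∀ n : ℕ, ∀ v ∈ Icc (0:ℝ) 1, c v ≤ v ^ α + (1/2) ^ n := by
    intro n
    induction n with
    | zero =>
      intro v hv
      have h2 := (cmem hmono h0 h1 v hv).2
      have h3 : (0:ℝ) ≤ v ^ α := Real.rpow_nonneg hv.1 _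
      norm_num; linarith
    | succ n ih =>
      intro v hv
      rcases le_or_gt v (1/3) with hv1 | hv1
      · have hx : (3*v) ∈ Icc (0:ℝ) 1 := ⟨by linarith [hv.1], by linarith⟩
        have hcv : c v = c (3*v) / 2 := by
          have := hs1 (3*v) hx; rwa [show 3*v/3 = v by ring] at this
        have hih := ih (3*v) hx
        have erp : (3*v) ^ α = 2 * v ^ α := rpow_triple hv.1
        rw [hcv, pow_succ]
        linarith
      rcases le_or_gt v (2/3) with hv2 | hv2
      · have hcv : c v = 1/2 := cmid hmono h0 h1 hs1 hs2 v ⟨hv1.le, hv2⟩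
        have mono : (1/3 : ℝ) ^ α ≤ v ^ α :=
          Real.rpow_le_rpow (by norm_num) hv1.le alpha_pos.le
        have hp : (0:ℝ) ≤ (1/2:ℝ) ^ (n+1) := by positivity
        rw [hcv]
        linarith [third_rpow]
      · have hw : (3*v - 2) ∈ Icc (0:ℝ) 1 := ⟨by linarith, by linarith [hv.2]⟩
        have hcv : c v = (1 + c (3*v - 2)) / 2 := by
          have := hs2 (3*v - 2) hw; rwa [show (3*v - 2 + 2)/3 = v by ring] at this
        have hih := ih _ hw
        have hkey := one_add_rpow hw
        have erp : (3*v - 2 + 2) ^ α = 2 * v ^ α := by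
          rw [show (3*v - 2 + 2) = 3 * v by ring]; exact rpow_triple hv.1
        rw [show (3*v - 2 + 2 : ℝ) = (3*v-2) + 2 by ring] at erp
        rw [hcv, pow_succ]
        linarith
  intro v hv
  refine le_of_forall_pos_le_add ?_
  intro ε hε
  obtain ⟨n, hn⟩ := exists_pow_lt_of_lt_one hε (by norm_num : (1/2 : ℝ) < 1)
  linarith [main n v hv]

include hmono h0 h1 hs1 hs2 in
lemma lemB : ∀ u ∈ Icc (0:ℝ) 1, 1 - c u ≤ (1 - u) ^ α := by
  have main : ∀ n : ℕ, ∀ u ∈ Icc (0:ℝ) 1, 1 - c u ≤ (1 - u) ^ α + (1/2) ^ n := by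
    intro n
    induction n with
    | zero =>
      intro u hu
      have h2 := (cmem hmono h0 h1 u hu).1
      have h3 : (0:ℝ) ≤ (1 - u) ^ α := Real.rpow_nonneg (by linarith [hu.2]) _
      norm_num; linarith
    | succ n ih =>
      intro u hu
      rcases le_or_gt (2/3) u with hu2 | hu2
      · have hw : (3*u - 2) ∈ Icc (0:ℝ) 1 := ⟨by linarith, by linarith [hu.2]⟩
        have hcu : c u = (1 + c (3*u - 2)) / 2 := by
          have := hs2 (3*u - 2) hw; rwa [show (3*u - 2 + 2)/3 = u by ring] at this
        have hih := ih _ hw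
        have erp : (3*(1-u)) ^ α = 2 * (1-u) ^ α := rpow_triple (by linarith [hu.2])
        rw [show (3*(1-u) : ℝ) = 1 - (3*u - 2) by ring] at erp
        rw [hcu, pow_succ]
        linarith
      rcases le_or_gt (1/3) u with hu1 | hu1
      · have hcu : c u = 1/2 := cmid hmono h0 h1 hs1 hs2 u ⟨hu1, hu2.le⟩
        have mono : (1/3 : ℝ) ^ α ≤ (1 - u) ^ α :=
          Real.rpow_le_rpow (by norm_num) (by linarith) alpha_pos.le
        have hp : (0:ℝ) ≤ (1/2:ℝ) ^ (n+1) := by positivity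
        rw [hcu]
        linarith [third_rpow]
      · have hx : (3*u) ∈ Icc (0:ℝ) 1 := ⟨by linarith [hu.1], by linarith⟩
        have hcu : c u = c (3*u) / 2 := by
          have := hs1 (3*u) hx; rwa [show 3*u/3 = u by ring] at this
        have hih := ih _ hx
        have hkey := one_add_rpow (w := 1 - 3*u) ⟨by linarith, by linarith [hu.1]⟩
        have erp : ((1 - 3*u) + 2) ^ α = 2 * (1-u) ^ α := by
          rw [show ((1 - 3*u) + 2 : ℝ) = 3 * (1 - u) by ring]
          exact rpow_triple (by linarith [hu.2])
        rw [hcu, pow_succ]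
        linarith
  intro u hu
  refine le_of_forall_pos_le_add ?_
  intro ε hε
  obtain ⟨n, hn⟩ := exists_pow_lt_of_lt_one hε (by norm_num : (1/2 : ℝ) < 1)
  linarith [main n u hu]

end Cantor

section Cantor2

variable {c : ℝ → ℝ}
  (hmono : MonotoneOn c (Set.Icc 0 1)) (h0 : c 0 = 0) (h1 : c 1 = 1)
  (hs1 : ∀ x ∈ Set.Icc (0:ℝ) 1, c (x / 3) = c x / 2)
  (hs2 : ∀ x ∈ Set.Icc (0:ℝ) 1, c ((x + 2) / 3) = (1 + c x) / 2)

include hmono h0 h1 hs1 hs2 in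
lemma cantorHolder : ∀ u ∈ Icc (0:ℝ) 1, ∀ v ∈ Icc (0:ℝ) 1, u ≤ v →
    c v - c u ≤ (v - u) ^ α := by
  have LA := lemA hmono h0 h1 hs1 hs2
  have LB := lemB hmono h0 h1 hs1 hs2
  have top : ∀ v ∈ Icc (0:ℝ) 1, 2/3 < v → c v - (1/2 : ℝ) ≤ (v - 2/3) ^ α := by
    intro v hv hv2
    have hw : (3*v - 2) ∈ Icc (0:ℝ) 1 := ⟨by linarith, by linarith [hv.2]⟩
    have hcv : c v = (1 + c (3*v - 2)) / 2 := by
      have := hs2 (3*v - 2) hw; rwa [show (3*v - 2 + 2)/3 = v by ring] at this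
    have hA := LA _ hw
    have erp : (3*(v - 2/3)) ^ α = 2 * (v - 2/3) ^ α := rpow_triple (by linarith)
    rw [show (3*(v - 2/3) : ℝ) = 3*v - 2 by ring] at erp
    rw [hcv]; linarith
  have bot : ∀ u ∈ Icc (0:ℝ) 1, u < 1/3 → (1/2 : ℝ) - c u ≤ ((1:ℝ)/3 - u) ^ α := by
    intro u hu hu1
    have hx : (3*u) ∈ Icc (0:ℝ) 1 := ⟨by linarith [hu.1], by linarith⟩
    have hcu : c u = c (3*u) / 2 := by
      have := hs1 (3*u) hx; rwa [show 3*u/3 = u by ring] at this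
    have hB := LB _ hx
    have erp : (3*((1:ℝ)/3 - u)) ^ α = 2 * ((1:ℝ)/3 - u) ^ α := rpow_triple (by linarith)
    rw [show (3*((1:ℝ)/3 - u) : ℝ) = 1 - 3*u by ring] at erp
    rw [hcu]; linarith
  have main : ∀ n : ℕ, ∀ u ∈ Icc (0:ℝ) 1, ∀ v ∈ Icc (0:ℝ) 1, u ≤ v →
      c v - c u ≤ (v - u) ^ α + (1/2)^n := by
    intro n
    induction n with
    | zero =>
      intro u hu v hv huv
      have := (cmem hmono h0 h1 u hu).1
      have := (cmem hmono h0 h1 v hv).2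
      have : (0:ℝ) ≤ (v - u) ^ α := Real.rpow_nonneg (by linarith) _
      norm_num
      linarith [(cmem hmono h0 h1 u hu).1, (cmem hmono h0 h1 v hv).2]
    | succ n ih =>
      intro u hu v hv huv
      rcases le_or_gt v (1/3) with hv1 | hv1
      · have hxu : (3*u) ∈ Icc (0:ℝ) 1 := ⟨by linarith [hu.1], by linarith⟩
        have hxv : (3*v) ∈ Icc (0:ℝ) 1 := ⟨by linarith [hv.1], by linarith⟩
        have hcu : c u = c (3*u) / 2 := by
          have := hs1 (3*u) hxu; rwa [show 3*u/3 = u by ring] at this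
        have hcv : c v = c (3*v) / 2 := by
          have := hs1 (3*v) hxv; rwa [show 3*v/3 = v by ring] at this
        have hih := ih (3*u) hxu (3*v) hxv (by linarith)
        have erp : (3*(v-u)) ^ α = 2 * (v-u) ^ α := rpow_triple (by linarith)
        rw [show (3*(v-u) : ℝ) = 3*v - 3*u by ring] at erp
        rw [hcu, hcv, pow_succ]
        linarith
      rcases le_or_gt (2/3) u with hu2 | hu2
      · have hxu : (3*u - 2) ∈ Icc (0:ℝ) 1 := ⟨by linarith, by linarith [hu.2]⟩
        have hxv : (3*v - 2) ∈ Icc (0:ℝ) 1 := ⟨by linarith, by linarith [hv.2]⟩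
        have hcu : c u = (1 + c (3*u - 2)) / 2 := by
          have := hs2 (3*u - 2) hxu; rwa [show (3*u - 2 + 2)/3 = u by ring] at this
        have hcv : c v = (1 + c (3*v - 2)) / 2 := by
          have := hs2 (3*v - 2) hxv; rwa [show (3*v - 2 + 2)/3 = v by ring] at this
        have hih := ih (3*u - 2) hxu (3*v - 2) hxv (by linarith)
        have erp : (3*(v-u)) ^ α = 2 * (v-u) ^ α := rpow_triple (by linarith)
        rw [show (3*(v-u) : ℝ) = (3*v - 2) - (3*u - 2) by ring] at erp
        rw [hcu, hcv, pow_succ]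
        linarith
      have herr : (0:ℝ) ≤ (1/2:ℝ)^(n+1) := by positivity
      rcases le_or_gt (1/3) u with hu1 | hu1
      · rcases le_or_gt v (2/3) with hv2 | hv2
        · have e1 : c u = 1/2 := cmid hmono h0 h1 hs1 hs2 u ⟨hu1, hu2.le⟩
          have e2 : c v = 1/2 := cmid hmono h0 h1 hs1 hs2 v ⟨hv1.le, hv2⟩
          have : (0:ℝ) ≤ (v - u) ^ α := Real.rpow_nonneg (by linarith) _
          rw [e1, e2]; linarith
        · have e1 : c u = 1/2 := cmid hmono h0 h1 hs1 hs2 u ⟨hu1, hu2.le⟩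
          have htop := top v hv hv2
          have mono : (v - 2/3 : ℝ) ^ α ≤ (v - u) ^ α :=
            Real.rpow_le_rpow (by linarith) (by linarith) alpha_pos.le
          rw [e1]; linarith
      · rcases le_or_gt v (2/3) with hv2 | hv2
        · have e2 : c v = 1/2 := cmid hmono h0 h1 hs1 hs2 v ⟨hv1.le, hv2⟩
          have hbot := bot u hu hu1
          have mono : ((1:ℝ)/3 - u) ^ α ≤ (v - u) ^ α :=
            Real.rpow_le_rpow (by linarith) (by linarith) alpha_pos.le
          rw [e2]; linarith
        · have htop := top v hv hv2
          have hbot := bot u hu hu1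
          have hkey := keyIneq (s := 3*v - 2) (t := 1 - 3*u)
            ⟨by linarith, by linarith [hv.2]⟩ ⟨by linarith, by linarith [hu.1]⟩
          have e1 : (3*v - 2 : ℝ) ^ α = 2 * (v - 2/3) ^ α := by
            rw [show (3*v - 2 : ℝ) = 3*(v - 2/3) by ring]; exact rpow_triple (by linarith)
          have e2 : (1 - 3*u : ℝ) ^ α = 2 * ((1:ℝ)/3 - u) ^ α := by
            rw [show (1 - 3*u : ℝ) = 3*((1:ℝ)/3 - u) by ring]; exact rpow_triple (by linarith)
          have e3 : (3*v - 2 + (1 - 3*u) + 1 : ℝ) ^ α = 2 * (v - u) ^ α := by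
            rw [show (3*v - 2 + (1 - 3*u) + 1 : ℝ) = 3*(v - u) by ring]
            exact rpow_triple (by linarith)
          rw [e1, e2, e3] at hkey
          linarith
  intro u hu v hv huv
  refine le_of_forall_pos_le_add ?_
  intro ε hε
  obtain ⟨n, hn⟩ := exists_pow_lt_of_lt_one hε (by norm_num : (1/2 : ℝ) < 1)
  linarith [main n u hu v hv huv]

end Cantor2

section PaperH

variable {c : ℝ → ℝ}
  (hmono : MonotoneOn c (Set.Icc 0 1)) (h0 : c 0 = 0) (h1 : c 1 = 1)
  (hs1 : ∀ x ∈ Set.Icc (0:ℝ) 1, c (x / 3) = c x / 2)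
  (hs2 : ∀ x ∈ Set.Icc (0:ℝ) 1, c ((x + 2) / 3) = (1 + c x) / 2)

include h1 in
lemma paperH_right : ∀ z : ℝ, 1 ≤ z → paperH c z = c (2 - z) := by
  intro z hz
  rcases eq_or_lt_of_le hz with rfl | hz'
  · simp [paperH, Real.one_rpow, h1, show (2:ℝ)-1 = 1 by norm_num]
  · rw [paperH, if_neg (by linarith)]

lemma paperH_left : ∀ z : ℝ, z ≤ 1 → paperH c z = z ^ α := fun z hz => if_pos hz

include hmono h0 h1 in
lemma paperH_mem : ∀ x ∈ Icc (0:ℝ) 2, paperH c x ∈ Icc (0:ℝ) 1 := by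
  intro x hx
  by_cases hx1 : x ≤ 1
  · rw [paperH_left x hx1]
    exact ⟨Real.rpow_nonneg hx.1 _, Real.rpow_le_one hx.1 hx1 alpha_pos.le⟩
  · push_neg at hx1
    rw [paperH_right h1 x hx1.le]
    exact cmem hmono h0 h1 (2 - x) ⟨by linarith [hx.2], by linarith⟩

include hmono h0 h1 hs1 hs2 in
lemma paperH_holder : ∀ x ∈ Icc (0:ℝ) 2, ∀ y ∈ Icc (0:ℝ) 2,
    |paperH c x - paperH c y| ≤ |x - y| ^ α := by
  have key : ∀ x ∈ Icc (0:ℝ) 2, ∀ y ∈ Icc (0:ℝ) 2, x ≤ y →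
      |paperH c x - paperH c y| ≤ (y - x) ^ α := by
    intro x hx y hy hxy
    rw [abs_sub_comm, abs_le]
    have hnn : (0:ℝ) ≤ (y - x) ^ α := Real.rpow_nonneg (by linarith) _
    by_cases hy1 : y ≤ 1
    · rw [paperH_left x (le_trans hxy hy1), paperH_left y hy1]
      have m : x ^ α ≤ y ^ α := Real.rpow_le_rpow hx.1 hxy alpha_pos.le
      have := rpow_holder hx.1 hxy
      constructor <;> linarith
    · push_neg at hy1
      rw [paperH_right h1 y hy1.le]
      have hyu : (2 - y) ∈ Icc (0:ℝ) 1 := ⟨by linarith [hy.2], by linarith⟩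
      by_cases hx1 : x ≤ 1
      · rw [paperH_left x hx1]
        have hx1' : x ^ α ≤ 1 := Real.rpow_le_one hx.1 hx1 alpha_pos.le
        have hB : 1 - c (2 - y) ≤ (1 - (2 - y)) ^ α := lemB hmono h0 h1 hs1 hs2 (2-y) hyu
        rw [show (1 - (2 - y) : ℝ) = y - 1 by ring] at hB
        have m1 : (y - 1 : ℝ) ^ α ≤ (y - x) ^ α :=
          Real.rpow_le_rpow (by linarith) (by linarith) alpha_pos.le
        have hsub : (1:ℝ) ≤ x ^ α + (1 - x) ^ α := by
          have := rpow_subadd hx.1 (by linarith : (0:ℝ) ≤ 1 - x)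
          rw [show (x + (1 - x) : ℝ) = 1 by ring, Real.one_rpow] at this
          linarith
        have hcy := cmem hmono h0 h1 (2-y) hyu
        have m2 : (1 - x : ℝ) ^ α ≤ (y - x) ^ α :=
          Real.rpow_le_rpow (by linarith) (by linarith) alpha_pos.le
        constructor <;> linarith [hcy.1, hcy.2]
      · push_neg at hx1
        rw [paperH_right h1 x hx1.le]
        have hxu : (2 - x) ∈ Icc (0:ℝ) 1 := ⟨by linarith [hx.2], by linarith⟩
        have hH := cantorHolder hmono h0 h1 hs1 hs2 (2-y) hyu (2-x) hxu (by linarith)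
        rw [show ((2 - x) - (2 - y) : ℝ) = y - x by ring] at hH
        have hmon : c (2 - y) ≤ c (2 - x) := hmono hyu hxu (by linarith)
        constructor <;> linarith
  intro x hx y hy
  rcases le_total x y with h | h
  · rw [abs_of_nonpos (sub_nonpos.2 h), neg_sub]; exact key x hx y hy h
  · rw [abs_sub_comm, abs_of_nonneg (sub_nonneg.2 h)]; exact key y hy x hx h

include hmono h0 h1 hs1 hs2 in
lemma paperH_cont : ContinuousOn (paperH c) (Icc (0:ℝ) 2) := by
  rw [Metric.continuousOn_iff]
  intro b hb ε hε
  refine ⟨ε ^ (α⁻¹), Real.rpow_pos_of_pos hε _, fun a ha hab => ?_⟩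
  have h1' : dist (paperH c a) (paperH c b) ≤ |a - b| ^ α := by
    rw [Real.dist_eq]; exact paperH_holder hmono h0 h1 hs1 hs2 a ha b hb
  have h2 : |a - b| ^ α < (ε ^ (α⁻¹)) ^ α := by
    apply Real.rpow_lt_rpow (abs_nonneg _) _ alpha_pos
    rwa [Real.dist_eq] at hab
  rw [← Real.rpow_mul hε.le, inv_mul_cancel₀ alpha_pos.ne', Real.rpow_one] at h2
  exact lt_of_le_of_lt h1' h2

include hmono h0 h1 hs1 hs2 in
lemma modCont_eq : ∀ δ ∈ Icc (0:ℝ) 2,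
    modCont (paperH c) 0 2 δ = if δ ≤ 1 then δ ^ α else 1 := by
  intro δ hδ
  have hδ0 := hδ.1
  have hδ2 := hδ.2
  by_cases hδ1 : δ ≤ 1
  · rw [if_pos hδ1]
    have hub : ∀ d ∈ {d : ℝ | ∃ x ∈ Set.Icc (0:ℝ) 2, ∃ y ∈ Set.Icc (0:ℝ) 2,
        |x - y| ≤ δ ∧ d = |paperH c x - paperH c y|}, d ≤ δ ^ α := by
      rintro d ⟨x, hx, y, hy, hxy, rfl⟩
      calc |paperH c x - paperH c y| ≤ |x - y| ^ α :=
            paperH_holder hmono h0 h1 hs1 hs2 x hx y hy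
        _ ≤ δ ^ α := Real.rpow_le_rpow (abs_nonneg _) hxy alpha_pos.le
    have hmem : δ ^ α ∈ {d : ℝ | ∃ x ∈ Set.Icc (0:ℝ) 2, ∃ y ∈ Set.Icc (0:ℝ) 2,
        |x - y| ≤ δ ∧ d = |paperH c x - paperH c y|} := by
      refine ⟨δ, ⟨hδ0, by linarith⟩, 0, ⟨le_rfl, by norm_num⟩, by
        rw [sub_zero, abs_of_nonneg hδ0], ?_⟩
      rw [paperH_left δ hδ1, paperH_left 0 (by norm_num)]
      rw [Real.zero_rpow alpha_pos.ne', sub_zero, abs_of_nonneg (Real.rpow_nonneg hδ0 _)]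
    exact le_antisymm (csSup_le ⟨_, hmem⟩ hub) (le_csSup ⟨_, hub⟩ hmem)
  · rw [if_neg hδ1]
    push_neg at hδ1
    have hub : ∀ d ∈ {d : ℝ | ∃ x ∈ Set.Icc (0:ℝ) 2, ∃ y ∈ Set.Icc (0:ℝ) 2,
        |x - y| ≤ δ ∧ d = |paperH c x - paperH c y|}, d ≤ 1 := by
      rintro d ⟨x, hx, y, hy, hxy, rfl⟩
      have m1 := paperH_mem hmono h0 h1 x hx
      have m2 := paperH_mem hmono h0 h1 y hy
      rw [abs_le]
      constructor <;> [linarith [m1.1, m2.2]; linarith [m1.2, m2.1]]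
    have hmem : (1:ℝ) ∈ {d : ℝ | ∃ x ∈ Set.Icc (0:ℝ) 2, ∃ y ∈ Set.Icc (0:ℝ) 2,
        |x - y| ≤ δ ∧ d = |paperH c x - paperH c y|} := by
      refine ⟨1, ⟨by norm_num, by norm_num⟩, 0, ⟨le_rfl, by norm_num⟩, by
        rw [sub_zero, abs_of_nonneg (by norm_num : (0:ℝ) ≤ 1)]; exact hδ1.le, ?_⟩
      rw [paperH_left 1 le_rfl, paperH_left 0 (by norm_num)]
      rw [Real.zero_rpow alpha_pos.ne', Real.one_rpow, sub_zero, abs_of_nonneg (by norm_num)]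
    exact le_antisymm (csSup_le ⟨_, hmem⟩ hub) (le_csSup ⟨_, hub⟩ hmem)

end PaperH

noncomputable def cantorLeft : ℕ → ℕ → ℝ
  | 0, _ => 0
  | (n+1), i => if i < 2^n then cantorLeft n i / 3 else (cantorLeft n (i - 2^n) + 2)/3

lemma cantorLeft_bounds : ∀ n : ℕ, ∀ i : ℕ, i < 2^n →
    0 ≤ cantorLeft n i ∧ cantorLeft n i + (1/3:ℝ)^n ≤ 1 := by
  intro n
  induction n with
  | zero => intro i hi; simp [cantorLeft]
  | succ n ih =>
    intro i hi
    by_cases h : i < 2^n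
    · obtain ⟨l1, l2⟩ := ih i h
      rw [cantorLeft, if_pos h]
      constructor
      · positivity
      · rw [pow_succ]
        linarith
    · push_neg at h
      have h2 : i - 2^n < 2^n := by
        have := hi; rw [pow_succ] at this; omega
      obtain ⟨l1, l2⟩ := ih (i - 2^n) h2
      rw [cantorLeft, if_neg (by omega)]
      constructor
      · positivity
      · rw [pow_succ]
        linarith

lemma cantorLeft_sep : ∀ n : ℕ, ∀ i j : ℕ, i < j → j < 2^n →
    cantorLeft n i + (1/3:ℝ)^n ≤ cantorLeft n j := by
  intro n
  induction n with
  | zero => intro i j hij hj; omega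
  | succ n ih =>
    intro i j hij hj
    simp only [cantorLeft]
    by_cases hjn : j < 2^n
    · have hin : i < 2^n := by omega
      rw [if_pos hjn, if_pos hin, pow_succ]
      have := ih i j hij hjn
      linarith
    · push_neg at hjn
      have hj2 : j - 2^n < 2^n := by rw [pow_succ] at hj; omega
      by_cases hin : i < 2^n
      · rw [if_pos hin, if_neg (by omega : ¬ j < 2^n), pow_succ]
        obtain ⟨l1, l2⟩ := cantorLeft_bounds n i hin
        have l3 := (cantorLeft_bounds n (j - 2^n) hj2).1
        nlinarith [pow_pos (by norm_num : (0:ℝ) < 1/3) n]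
      · push_neg at hin
        rw [if_neg (by omega : ¬ i < 2^n), if_neg (by omega : ¬ j < 2^n), pow_succ]
        have := ih (i - 2^n) (j - 2^n) (by omega) hj2
        linarith

section CantorIntervals

variable {c : ℝ → ℝ}
  (hmono : MonotoneOn c (Set.Icc 0 1)) (h0 : c 0 = 0) (h1 : c 1 = 1)
  (hs1 : ∀ x ∈ Set.Icc (0:ℝ) 1, c (x / 3) = c x / 2)
  (hs2 : ∀ x ∈ Set.Icc (0:ℝ) 1, c ((x + 2) / 3) = (1 + c x) / 2)

include h0 h1 hs1 hs2 in
lemma cantorLeft_incr : ∀ n : ℕ, ∀ i : ℕ, i < 2^n →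
    c (cantorLeft n i + (1/3:ℝ)^n) - c (cantorLeft n i) = (1/2:ℝ)^n := by
  intro n
  induction n with
  | zero => intro i hi; simp [cantorLeft, h0, h1]
  | succ n ih =>
    intro i hi
    by_cases h : i < 2^n
    · obtain ⟨l1, l2⟩ := cantorLeft_bounds n i h
      set L := cantorLeft n i with hL
      have e1 : c (L/3) = c L / 2 := hs1 L ⟨l1, by nlinarith [pow_pos (by norm_num : (0:ℝ) < 1/3) n]⟩
      have e2 : c ((L + (1/3:ℝ)^n)/3) = c (L + (1/3:ℝ)^n) / 2 :=
        hs1 _ ⟨by positivity, l2⟩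
      rw [cantorLeft, if_pos h, ← hL]
      rw [show (L/3 + (1/3:ℝ)^(n+1)) = (L + (1/3:ℝ)^n)/3 by rw [pow_succ]; ring]
      rw [e1, e2]
      have := ih i h
      rw [pow_succ]
      linarith
    · push_neg at h
      have h2 : i - 2^n < 2^n := by rw [pow_succ] at hi; omega
      obtain ⟨l1, l2⟩ := cantorLeft_bounds n (i - 2^n) h2
      set L := cantorLeft n (i - 2^n) with hL
      have e1 : c ((L + 2)/3) = (1 + c L) / 2 :=
        hs2 L ⟨l1, by nlinarith [pow_pos (by norm_num : (0:ℝ) < 1/3) n]⟩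
      have e2 : c ((L + (1/3:ℝ)^n + 2)/3) = (1 + c (L + (1/3:ℝ)^n)) / 2 :=
        hs2 _ ⟨by positivity, l2⟩
      rw [cantorLeft, if_neg (by omega), ← hL]
      rw [show ((L+2)/3 + (1/3:ℝ)^(n+1)) = (L + (1/3:ℝ)^n + 2)/3 by rw [pow_succ]; ring]
      rw [e1, e2]
      have := ih (i - 2^n) h2
      rw [pow_succ]
      linarith

include h0 h1 hs1 hs2 in
lemma paperH_notAC : ¬ AbsolutelyContinuousOn (paperH c) 0 2 := by
  intro hAC
  obtain ⟨δ, hδ, hprop⟩ := hAC (1/2) (by norm_num)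
  obtain ⟨n, hn⟩ := exists_pow_lt_of_lt_one hδ (by norm_num : (2/3:ℝ) < 1)
  set x : ℕ → ℝ := fun i => 2 - (cantorLeft n i + (1/3:ℝ)^n) with hx
  set y : ℕ → ℝ := fun i => 2 - cantorLeft n i with hy
  have hb : ∀ i < 2^n, (0:ℝ) ≤ x i ∧ x i ≤ y i ∧ y i ≤ 2 := by
    intro i hi
    obtain ⟨l1, l2⟩ := cantorLeft_bounds n i hi
    have hp : (0:ℝ) < (1/3:ℝ)^n := by positivity
    refine ⟨by simp only [hx]; linarith, by simp only [hx, hy]; linarith,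
      by simp only [hy]; linarith⟩
  have hdisj : ∀ i < 2^n, ∀ j < 2^n, i ≠ j →
      Disjoint (Set.Ioo (x i) (y i)) (Set.Ioo (x j) (y j)) := by
    have key : ∀ i j, i < j → j < 2^n → Disjoint (Set.Ioo (x i) (y i)) (Set.Ioo (x j) (y j)) := by
      intro i j hij hj
      have := cantorLeft_sep n i j hij hj
      rw [Set.disjoint_left]
      intro z hz1 hz2
      have : y j ≤ x i := by simp only [hx, hy]; linarith
      exact absurd (lt_of_lt_of_le hz2.2 (this.trans hz1.1.le)) (lt_irrefl z)
    intro i hi j hj hij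
    rcases lt_or_gt_of_ne hij with h | h
    · exact key i j h hj
    · exact (key j i h hi).symm
  have hsum : (∑ i ∈ Finset.range (2^n), (y i - x i)) < δ := by
    have : ∀ i ∈ Finset.range (2^n), y i - x i = (1/3:ℝ)^n := by
      intro i _; simp only [hx, hy]; ring
    rw [Finset.sum_congr rfl this, Finset.sum_const, Finset.card_range, nsmul_eq_mul]
    push_cast
    have e : (2:ℝ)^n * (1/3)^n = (2/3:ℝ)^n := by rw [← mul_pow]; norm_num
    rw [e]; exact hn
  have hval : (∑ i ∈ Finset.range (2^n), |paperH c (y i) - paperH c (x i)|) = 1 := by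
    have : ∀ i ∈ Finset.range (2^n), |paperH c (y i) - paperH c (x i)| = (1/2:ℝ)^n := by
      intro i hi
      rw [Finset.mem_range] at hi
      obtain ⟨l1, l2⟩ := cantorLeft_bounds n i hi
      have hp : (0:ℝ) < (1/3:ℝ)^n := by positivity
      have e1 : paperH c (y i) = c (cantorLeft n i) := by
        rw [hy]
        rw [paperH_right h1 _ (by simp only; linarith)]
        norm_num
      have e2 : paperH c (x i) = c (cantorLeft n i + (1/3:ℝ)^n) := by
        rw [hx]
        rw [paperH_right h1 _ (by simp only; linarith)]
        norm_num
      rw [e1, e2, abs_sub_comm, abs_of_nonneg]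
      · exact cantorLeft_incr h0 h1 hs1 hs2 n i hi
      · rw [cantorLeft_incr h0 h1 hs1 hs2 n i hi]; positivity
    rw [Finset.sum_congr rfl this, Finset.sum_const, Finset.card_range, nsmul_eq_mul]
    push_cast
    rw [← mul_pow]; norm_num
  have := hprop (2^n) x y hb hdisj hsum
  rw [hval] at this
  norm_num at this

end CantorIntervals

lemma packing (g : ℝ → ℝ) (A B : ℝ) (hg : MonotoneOn g (Icc A B)) :
    ∀ N : ℕ, ∀ s : Finset ℕ, s.card ≤ N → ∀ b, b ≤ B → A ≤ b → ∀ x y : ℕ → ℝ,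
    (∀ i ∈ s, A ≤ x i ∧ x i ≤ y i ∧ y i ≤ b) →
    (∀ i ∈ s, ∀ j ∈ s, i ≠ j → Disjoint (Set.Ioo (x i) (y i)) (Set.Ioo (x j) (y j))) →
    ∑ i ∈ s, (g (y i) - g (x i)) ≤ g b - g A := by
  intro N
  induction N with
  | zero =>
    intro s hcard b hbB hAb x y hxy hdisj
    rw [Finset.card_eq_zero.1 (Nat.le_zero.1 hcard), Finset.sum_empty]
    have := hg (⟨le_rfl, le_trans hAb hbB⟩ : A ∈ Icc A B) (⟨hAb, hbB⟩ : b ∈ Icc A B) hAb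
    linarith
  | succ N ihN =>
    intro s hcard b hbB hAb x y hxy hdisj
    set s' := s.filter (fun i => x i < y i) with hs'
    have hsplit : ∑ i ∈ s, (g (y i) - g (x i)) = ∑ i ∈ s', (g (y i) - g (x i)) := by
      rw [hs', Finset.sum_filter_of_ne]
      intro i hi hne
      by_contra hlt
      push_neg at hlt
      have : x i = y i := le_antisymm (hxy i hi).2.1 hlt
      rw [this] at hne; simp at hne
    rw [hsplit]
    rcases Finset.eq_empty_or_nonempty s' with he | hne
    · rw [he, Finset.sum_empty]
      have := hg (⟨le_rfl, le_trans hAb hbB⟩ : A ∈ Icc A B) (⟨hAb, hbB⟩ : b ∈ Icc A B) hAb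
      linarith
    · obtain ⟨i₀, hi₀, hmax⟩ := Finset.exists_max_image s' x hne
      have hi₀s : i₀ ∈ s := Finset.mem_of_mem_filter _ hi₀
      have hi₀lt : x i₀ < y i₀ := (Finset.mem_filter.1 hi₀).2
      have hbd₀ := hxy i₀ hi₀s
      have key : ∀ j ∈ s'.erase i₀, y j ≤ x i₀ := by
        intro j hj
        have hjne : j ≠ i₀ := Finset.ne_of_mem_erase hj
        have hjs' : j ∈ s' := Finset.mem_of_mem_erase hj
        have hjs : j ∈ s := Finset.mem_of_mem_filter _ hjs'
        have hjlt : x j < y j := (Finset.mem_filter.1 hjs').2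
        by_contra hyj
        push_neg at hyj
        have hxj : x j ≤ x i₀ := hmax j hjs'
        set z := (x i₀ + min (y j) (y i₀)) / 2 with hz
        have hmin : x i₀ < min (y j) (y i₀) := lt_min hyj hi₀lt
        have hz1 : z ∈ Set.Ioo (x j) (y j) :=
          ⟨by rw [hz]; have := min_le_left (y j) (y i₀); linarith,
           by rw [hz]; have := min_le_left (y j) (y i₀); linarith⟩
        have hz2 : z ∈ Set.Ioo (x i₀) (y i₀) :=
          ⟨by rw [hz]; linarith,
           by rw [hz]; have := min_le_right (y j) (y i₀); linarith⟩
        exact Set.disjoint_left.1 (hdisj j hjs i₀ hi₀s hjne) hz1 hz2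
      have hcard' : (s'.erase i₀).card ≤ N := by
        have h1 : s'.card ≤ s.card := Finset.card_filter_le _ _
        have h2 := Finset.card_erase_of_mem hi₀
        omega
      have hIH := ihN (s'.erase i₀) hcard' (x i₀) (by linarith [hbd₀.2.1, hbd₀.2.2]) hbd₀.1 x y
        (fun i hi => ⟨(hxy i (Finset.mem_of_mem_filter _ (Finset.mem_of_mem_erase hi))).1,
          (hxy i (Finset.mem_of_mem_filter _ (Finset.mem_of_mem_erase hi))).2.1, key i hi⟩)
        (fun i hi j hj hij => hdisj i (Finset.mem_of_mem_filter _ (Finset.mem_of_mem_erase hi))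
          j (Finset.mem_of_mem_filter _ (Finset.mem_of_mem_erase hj)) hij)
      rw [← Finset.add_sum_erase _ _ hi₀]
      have hlast : g (y i₀) - g (x i₀) ≤ g b - g (x i₀) := by
        have := hg (⟨le_trans hbd₀.1 hbd₀.2.1, le_trans hbd₀.2.2 hbB⟩ :
          y i₀ ∈ Icc A B) (⟨hAb, hbB⟩ : b ∈ Icc A B) hbd₀.2.2
        linarith
      linarith

lemma omega_mono : MonotoneOn (fun δ : ℝ => if δ ≤ 1 then δ ^ α else 1) (Icc (0:ℝ) 2) := by
  intro u hu v hv huv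
  simp only
  by_cases hv1 : v ≤ 1
  · rw [if_pos (le_trans huv hv1), if_pos hv1]
    exact Real.rpow_le_rpow hu.1 huv alpha_pos.le
  · rw [if_neg hv1]
    by_cases hu1 : u ≤ 1
    · rw [if_pos hu1]
      exact Real.rpow_le_one hu.1 hu1 alpha_pos.le
    · rw [if_neg hu1]

lemma omega_lip {η : ℝ} (hη0 : 0 < η) (hη1 : η ≤ 1) :
    ∀ u v : ℝ, η ≤ u → u ≤ v → v ≤ 2 →
    (if v ≤ 1 then v ^ α else 1) - (if u ≤ 1 then u ^ α else 1) ≤ η ^ (α - 1) * (v - u) := by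
  have hL0 : (0:ℝ) < η ^ (α - 1) := Real.rpow_pos_of_pos hη0 _
  have core : ∀ u v : ℝ, η ≤ u → u ≤ v → v ≤ 1 → v ^ α - u ^ α ≤ η ^ (α - 1) * (v - u) := by
    intro u v hηu huv hv1
    have h1 : v ^ α - u ^ α ≤ (η + (v - u)) ^ α - η ^ α := by
      have := concaveIncr (a := η) (b := u) hη0.le hηu (by linarith : (0:ℝ) ≤ v - u)
      rw [show (u + (v - u) : ℝ) = v by ring] at this
      linarith
    have ht0 : (0:ℝ) ≤ (v - u) / η := div_nonneg (by linarith) hη0.le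
    have hb : (1 + (v - u)/η) ^ α ≤ 1 + α * ((v - u)/η) :=
      rpow_one_add_le_one_add_mul_self (by linarith) alpha_pos.le alpha_lt_one.le
    have e : (η + (v - u) : ℝ) = η * (1 + (v - u)/η) := by field_simp
    have h2 : (η + (v - u)) ^ α ≤ η ^ α * (1 + α * ((v - u)/η)) := by
      rw [e, Real.mul_rpow hη0.le (by positivity)]
      exact mul_le_mul_of_nonneg_left hb (Real.rpow_nonneg hη0.le _)
    have e2 : η ^ α * (1 + α * ((v - u)/η)) = η ^ α + α * (η ^ (α - 1) * (v - u)) := by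
      rw [Real.rpow_sub hη0, Real.rpow_one]
      field_simp
    have h3 : α * (η ^ (α - 1) * (v - u)) ≤ η ^ (α - 1) * (v - u) := by
      have hnn : (0:ℝ) ≤ η ^ (α - 1) * (v - u) := by
        apply mul_nonneg hL0.le; linarith
      nlinarith [alpha_lt_one, hnn]
    linarith
  intro u v hηu huv hv2
  by_cases hv1 : v ≤ 1
  · rw [if_pos hv1, if_pos (le_trans huv hv1)]
    exact core u v hηu huv hv1
  · rw [if_neg hv1]
    push_neg at hv1
    by_cases hu1 : u ≤ 1
    · rw [if_pos hu1]
      have := core u 1 hηu hu1 le_rfl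
      rw [Real.one_rpow] at this
      nlinarith [hL0]
    · rw [if_neg hu1]
      have : (0:ℝ) ≤ η ^ (α-1) * (v - u) := mul_nonneg hL0.le (by linarith)
      linarith

lemma split_eq (g : ℝ → ℝ) (η x y : ℝ) (hxy : x ≤ y) :
    g y - g x = (g (min y η) - g (min x η)) + (g (max y η) - g (max x η)) := by
  rcases le_total y η with h1 | h1
  · rw [min_eq_left h1, min_eq_left (le_trans hxy h1), max_eq_right h1,
      max_eq_right (le_trans hxy h1)]
    ring
  · rcases le_total x η with h2 | h2
    · rw [min_eq_right h1, min_eq_left h2, max_eq_left h1, max_eq_right h2]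
      ring
    · rw [min_eq_right h1, min_eq_right h2, max_eq_left h1, max_eq_left h2]
      ring

lemma omega_AC : AbsolutelyContinuousOn (fun δ : ℝ => if δ ≤ 1 then δ ^ cantorAlpha else 1) 0 2 := by
  intro ε hε
  set ω : ℝ → ℝ := fun δ => if δ ≤ 1 then δ ^ α else 1 with hω
  set η : ℝ := min 1 ((ε/4) ^ (α⁻¹)) with hη
  have hη0 : 0 < η := lt_min one_pos (Real.rpow_pos_of_pos (by linarith) _)
  have hη1 : η ≤ 1 := min_le_left _ _
  have hηα : η ^ α ≤ ε/4 := by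
    have h1 : η ^ α ≤ ((ε/4) ^ (α⁻¹)) ^ α :=
      Real.rpow_le_rpow hη0.le (min_le_right _ _) alpha_pos.le
    rwa [← Real.rpow_mul (by linarith : (0:ℝ) ≤ ε/4), inv_mul_cancel₀ alpha_pos.ne',
      Real.rpow_one] at h1
  set L : ℝ := η ^ (α - 1) with hL
  have hL0 : (0:ℝ) < L := Real.rpow_pos_of_pos hη0 _
  refine ⟨(ε/2)/L, by positivity, ?_⟩
  intro n x y hb hdisj hsum
  have hmem : ∀ i < n, x i ∈ Icc (0:ℝ) 2 ∧ y i ∈ Icc (0:ℝ) 2 := by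
    intro i hi
    obtain ⟨b1, b2, b3⟩ := hb i hi
    exact ⟨⟨b1, by linarith⟩, ⟨by linarith, b3⟩⟩
  have habs : ∀ i ∈ Finset.range n, |ω (y i) - ω (x i)| = ω (y i) - ω (x i) := by
    intro i hi
    rw [Finset.mem_range] at hi
    obtain ⟨m1, m2⟩ := hmem i hi
    exact abs_of_nonneg (by linarith [omega_mono m1 m2 (hb i hi).2.1])
  rw [Finset.sum_congr rfl habs]
  have hsplit : ∀ i ∈ Finset.range n, ω (y i) - ω (x i) =
      (ω (min (y i) η) - ω (min (x i) η)) + (ω (max (y i) η) - ω (max (x i) η)) := by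
    intro i hi
    rw [Finset.mem_range] at hi
    exact split_eq ω η (x i) (y i) (hb i hi).2.1
  rw [Finset.sum_congr rfl hsplit, Finset.sum_add_distrib]
  have hIooMin : ∀ x' y' : ℝ, Ioo (min x' η) (min y' η) ⊆ Ioo x' y' := by
    intro x' y' z hz
    rcases le_total x' η with h | h
    · refine ⟨?_, lt_of_lt_of_le hz.2 (min_le_left _ _)⟩
      have := hz.1; rwa [min_eq_left h] at this
    · have h1 : η < z := by have := hz.1; rwa [min_eq_right h] at this
      have h2 : z < η := lt_of_lt_of_le hz.2 (min_le_right _ _)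
      exact absurd h2 (not_lt.2 h1.le)
  have part1 : ∑ i ∈ Finset.range n, (ω (min (y i) η) - ω (min (x i) η)) ≤ ε/4 := by
    have hgη : MonotoneOn ω (Icc (0:ℝ) η) :=
      omega_mono.mono (Icc_subset_Icc le_rfl (by linarith))
    have hpack := packing ω 0 η hgη n (Finset.range n) (by simp) η le_rfl hη0.le
      (fun i => min (x i) η) (fun i => min (y i) η)
      (fun i hi => by
        rw [Finset.mem_range] at hi
        exact ⟨le_min (hb i hi).1 hη0.le, min_le_min (hb i hi).2.1 le_rfl, min_le_right _ _⟩)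
      (fun i hi j hj hij => by
        rw [Finset.mem_range] at hi hj
        exact Disjoint.mono (hIooMin (x i) (y i)) (hIooMin (x j) (y j)) (hdisj i hi j hj hij))
    have e1 : ω η = η ^ α := if_pos hη1
    have e2 : ω 0 = 0 := by
      show (if (0:ℝ) ≤ 1 then (0:ℝ) ^ α else 1) = 0
      rw [if_pos (by norm_num : (0:ℝ) ≤ 1), Real.zero_rpow alpha_pos.ne']
    rw [e1, e2] at hpack
    linarith
  have part2 : ∑ i ∈ Finset.range n, (ω (max (y i) η) - ω (max (x i) η)) < ε/2 := by
    have hterm : ∀ i ∈ Finset.range n,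
        ω (max (y i) η) - ω (max (x i) η) ≤ L * (y i - x i) := by
      intro i hi
      rw [Finset.mem_range] at hi
      obtain ⟨b1, b2, b3⟩ := hb i hi
      have hlip := omega_lip hη0 hη1 (max (x i) η) (max (y i) η) (le_max_right _ _)
        (max_le_max b2 le_rfl) (max_le (by linarith) (by linarith))
      have hdd : max (y i) η - max (x i) η ≤ y i - x i := by
        rcases le_total (x i) η with h | h
        · rcases le_total (y i) η with h' | h'
          · rw [max_eq_right h, max_eq_right h']; linarith
          · rw [max_eq_right h, max_eq_left h']; linarith
        · rw [max_eq_left h, max_eq_left (le_trans h b2)]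
      calc ω (max (y i) η) - ω (max (x i) η) ≤ L * (max (y i) η - max (x i) η) := hlip
        _ ≤ L * (y i - x i) := mul_le_mul_of_nonneg_left hdd hL0.le
    calc ∑ i ∈ Finset.range n, (ω (max (y i) η) - ω (max (x i) η))
        ≤ ∑ i ∈ Finset.range n, L * (y i - x i) := Finset.sum_le_sum hterm
      _ = L * ∑ i ∈ Finset.range n, (y i - x i) := by rw [Finset.mul_sum]
      _ < L * ((ε/2)/L) := mul_lt_mul_of_pos_left hsum hL0
      _ = ε/2 := by field_simp
  linarith

theorem stmt15 (c : ℝ → ℝ) (hc : IsCantorFunction c) :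
    ContinuousOn (paperH c) (Set.Icc 0 2) ∧
    ¬ AbsolutelyContinuousOn (paperH c) 0 2 ∧
    (∀ δ ∈ Set.Icc (0:ℝ) 2,
      modCont (paperH c) 0 2 δ = if δ ≤ 1 then δ ^ cantorAlpha else 1) ∧
    AbsolutelyContinuousOn (fun δ : ℝ => if δ ≤ 1 then δ ^ cantorAlpha else 1) 0 2 := by
  obtain ⟨hmono, h0, h1, hs1, hs2⟩ := hc
  exact ⟨paperH_cont hmono h0 h1 hs1 hs2, paperH_notAC h0 h1 hs1 hs2,
    modCont_eq hmono h0 h1 hs1 hs2, omega_AC⟩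
end

section
/- There exists a continuous, non-monotone function h : [0,2] → ℝ that is not absolutely continuous but whose minimal modulus of continuity ω_h is absolutely continuous on [0,2]. -/
noncomputable def TT (t : ℝ) : ℝ := 2 * |t - round t|

lemma round_min (t : ℝ) (k : ℤ) : |t - round t| ≤ |t - k| := by
  rcases eq_or_ne k (round t) with rfl | hk
  · exact le_rfl
  · have h1 : (1:ℝ) ≤ |(round t : ℝ) - k| := by
      have : round t - k ≠ 0 := sub_ne_zero.2 (Ne.symm hk)
      have h0 := Int.one_le_abs this
      have h0' : ((1:ℤ):ℝ) ≤ ((|round t - k| : ℤ) : ℝ) := by exact_mod_cast h0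
      simpa [Int.cast_abs, Int.cast_sub] using h0'
    have h2 := abs_sub_round t
    have h3 : |(round t : ℝ) - k| ≤ |(round t:ℝ) - t| + |t - k| := abs_sub_le _ _ _
    have h4 : |(round t:ℝ) - t| = |t - round t| := abs_sub_comm _ _
    linarith

lemma TT_nonneg (t : ℝ) : 0 ≤ TT t := by unfold TT; positivity

lemma TT_le_one (t : ℝ) : TT t ≤ 1 := by
  have := abs_sub_round t; unfold TT; linarith

lemma TT_le (t : ℝ) (k : ℤ) : TT t ≤ 2 * |t - k| := by
  have := round_min t k; unfold TT; linarith

lemma TT_lip (u v : ℝ) : |TT u - TT v| ≤ 2 * |u - v| := by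
  have h1 : TT u ≤ TT v + 2 * |u - v| := by
    have := TT_le u (round v)
    have h2 : |u - round v| ≤ |u - v| + |v - round v| := abs_sub_le _ _ _
    unfold TT at *; linarith
  have h1' : TT v ≤ TT u + 2 * |u - v| := by
    have := TT_le v (round u)
    have h2 : |v - round u| ≤ |v - u| + |u - round u| := abs_sub_le _ _ _
    have h3 : |v - u| = |u - v| := abs_sub_comm _ _
    unfold TT at *; linarith
  rw [abs_sub_le_iff]; constructor <;> linarith

lemma TT_int (k : ℤ) : TT k = 0 := by
  unfold TT; rw [round_intCast]; simp

lemma TT_int_add (k : ℤ) (s : ℝ) (h0 : 0 ≤ s) (h1 : s ≤ 1/2) : TT (k + s) = 2 * s := by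
  unfold TT
  rw [add_comm, round_add_intCast]
  rcases lt_or_eq_of_le h1 with h | h
  · have : round s = 0 := round_eq_zero_iff.2 ⟨by linarith, by linarith⟩
    rw [this]; push_cast; rw [show s + k - (0 + k) = s by ring, abs_of_nonneg h0]
  · have : round s = 1 := by
      subst h; rw [show (1/2 : ℝ) = 1 - 1/2 by norm_num, round_eq]; norm_num
    rw [this]; push_cast; rw [show s + k - (1 + k) = s - 1 by ring, abs_of_nonpos (by linarith)]
    linarith

noncomputable def nn (x : ℝ) : ℕ := Nat.log 2 ⌊1/x⌋₊ + 1

noncomputable def hh (x : ℝ) : ℝ :=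
  if x ∈ Set.Ioc (0:ℝ) 1 then ((2:ℝ)^(nn x))⁻¹ * TT ((4:ℝ)^(nn x) * x) else 0

lemma one_le_nn (x : ℝ) : 1 ≤ nn x := Nat.le_add_left 1 _

lemma four_pow (n : ℕ) : (4:ℝ)^n = 2^n * 2^n := by
  rw [show (4:ℝ) = 2*2 by norm_num, mul_pow]

lemma mem_block (x : ℝ) (hx : x ∈ Set.Ioc (0:ℝ) 1) :
    ((2:ℝ)^(nn x))⁻¹ < x ∧ x ≤ 2 * ((2:ℝ)^(nn x))⁻¹ := by
  obtain ⟨hx0, hx1⟩ := hx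
  set m := ⌊1/x⌋₊ with hm
  have hinv1 : (1:ℝ) ≤ 1/x := by rw [le_div_iff₀ hx0]; linarith
  have hminv : (m:ℝ) ≤ 1/x := Nat.floor_le (by linarith)
  have hm1 : 1 ≤ m := Nat.le_floor (by exact_mod_cast hinv1)
  have hmne : m ≠ 0 := by omega
  set L := Nat.log 2 m with hL
  have hpow_le : (2:ℕ)^L ≤ m := Nat.pow_log_le_self 2 hmne
  have hlt : m < 2^(L+1) := Nat.lt_pow_succ_log_self (by norm_num) m
  constructor
  · -- x > 2⁻^(L+1)
    have h2 : 1/x < (2:ℝ)^(L+1) := by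
      have : (1:ℝ)/x < m + 1 := Nat.lt_floor_add_one (1/x)
      have h3 : ((m:ℝ) + 1) ≤ (2:ℝ)^(L+1) := by exact_mod_cast Nat.succ_le_of_lt hlt
      linarith
    have hp : (0:ℝ) < (2:ℝ)^(L+1) := by positivity
    show ((2:ℝ)^(L+1))⁻¹ < x
    rw [inv_lt_comm₀ hp hx0]
    simpa [one_div] using h2
  · -- x ≤ 2 * 2⁻^(L+1) = 2^⁻L
    have h2 : (2:ℝ)^L ≤ 1/x := by
      have : ((2:ℕ)^L : ℝ) ≤ (m:ℝ) := by exact_mod_cast hpow_le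
      push_cast at this; linarith
    have hp : (0:ℝ) < (2:ℝ)^L := by positivity
    have : x ≤ ((2:ℝ)^L)⁻¹ := by
      rw [le_inv_comm₀ hx0 hp]
      simpa [one_div] using h2
    calc x ≤ ((2:ℝ)^L)⁻¹ := this
      _ = 2 * ((2:ℝ)^(L+1))⁻¹ := by rw [pow_succ]; field_simp

lemma nn_eq {n : ℕ} (hn : 1 ≤ n) {x : ℝ} (h1 : ((2:ℝ)^n)⁻¹ < x) (h2 : x ≤ 2 * ((2:ℝ)^n)⁻¹) :
    nn x = n := by
  have hx0 : 0 < x := lt_trans (by positivity) h1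
  set m := ⌊1/x⌋₊ with hm
  have hplt : (0:ℝ) < (2:ℝ)^n := by positivity
  have hub : (1:ℝ)/x < 2^n := by
    rw [div_lt_iff₀ hx0]
    rw [inv_lt_comm₀ hplt hx0] at h1
    calc (1:ℝ) = x * x⁻¹ := by field_simp
      _ < x * 2^n := by
          apply mul_lt_mul_of_pos_left h1 hx0
      _ = 2^n * x := mul_comm _ _
  have hlb : (2:ℝ)^(n-1) ≤ 1/x := by
    have h2' : x ≤ ((2:ℝ)^(n-1))⁻¹ := by
      have : 2 * ((2:ℝ)^n)⁻¹ = ((2:ℝ)^(n-1))⁻¹ := by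
        have : n = (n-1) + 1 := by omega
        rw [this, pow_succ]
        field_simp; ring_nf; congr 1; omega
      linarith [h2, this]
    have hp' : (0:ℝ) < (2:ℝ)^(n-1) := by positivity
    rw [le_inv_comm₀ hx0 hp'] at h2'
    simpa [one_div] using h2'
  have hmlt : m < 2^n := by
    have : (m:ℝ) ≤ 1/x := Nat.floor_le (by positivity)
    have : (m:ℝ) < (2:ℝ)^n := lt_of_le_of_lt this hub
    exact_mod_cast this
  have hmge : 2^(n-1) ≤ m := by
    have : ((2^(n-1) : ℕ) : ℝ) ≤ 1/x := by push_cast; exact hlb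
    exact Nat.le_floor this
  have : Nat.log 2 m = n - 1 := by
    apply Nat.log_eq_of_pow_le_of_lt_pow hmge
    have : n - 1 + 1 = n := by omega
    rw [this]; exact hmlt
  unfold nn
  rw [← hm, this]; omega

lemma hh_eq {n : ℕ} (hn : 1 ≤ n) {x : ℝ} (h1 : ((2:ℝ)^n)⁻¹ < x) (h2 : x ≤ 2 * ((2:ℝ)^n)⁻¹) :
    hh x = ((2:ℝ)^n)⁻¹ * TT ((4:ℝ)^n * x) := by
  have hx0 : 0 < x := lt_trans (by positivity) h1
  have hx1 : x ≤ 1 := by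
    have : 2 * ((2:ℝ)^n)⁻¹ ≤ 1 := by
      have h4 : (2:ℝ) ≤ 2^n := by
        calc (2:ℝ) = 2^1 := (pow_one 2).symm
          _ ≤ 2^n := pow_le_pow_right₀ (by norm_num) hn
      rw [mul_inv_le_iff₀ (by positivity)]; linarith
    linarith
  unfold hh
  rw [if_pos ⟨hx0, hx1⟩, nn_eq hn h1 h2]


lemma hh_nonneg (x : ℝ) : 0 ≤ hh x := by
  unfold hh; split
  · have := TT_nonneg ((4:ℝ)^(nn x) * x); positivity
  · exact le_rfl

lemma hh_le_top {n : ℕ} (hn : 1 ≤ n) {x : ℝ} (h1 : ((2:ℝ)^n)⁻¹ < x)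
    (h2 : x ≤ 2 * ((2:ℝ)^n)⁻¹) : hh x ≤ ((2:ℝ)^n)⁻¹ := by
  rw [hh_eq hn h1 h2]
  have := TT_le_one ((4:ℝ)^n * x)
  have hq : (0:ℝ) < ((2:ℝ)^n)⁻¹ := by positivity
  nlinarith

lemma hh_le_left {n : ℕ} (hn : 1 ≤ n) {x : ℝ} (h1 : ((2:ℝ)^n)⁻¹ < x)
    (h2 : x ≤ 2 * ((2:ℝ)^n)⁻¹) : hh x ≤ 2^(n+1) * (x - ((2:ℝ)^n)⁻¹) := by
  rw [hh_eq hn h1 h2]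
  have hT := TT_le ((4:ℝ)^n * x) ((2:ℤ)^n)
  have hcast : (((2:ℤ)^n : ℤ) : ℝ) = (2:ℝ)^n := by push_cast; ring
  rw [hcast] at hT
  have hid : |(4:ℝ)^n * x - (2:ℝ)^n| = (4:ℝ)^n * |x - ((2:ℝ)^n)⁻¹| := by
    rw [← abs_of_pos (show (0:ℝ) < (4:ℝ)^n by positivity), ← abs_mul]
    congr 1
    rw [four_pow]
    rw [abs_of_pos (show (0:ℝ) < 2^n*2^n by positivity)]
    field_simp
  rw [hid] at hT
  have habs : |x - ((2:ℝ)^n)⁻¹| = x - ((2:ℝ)^n)⁻¹ := abs_of_pos (by linarith)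
  rw [habs] at hT
  have hq : (0:ℝ) < ((2:ℝ)^n)⁻¹ := by positivity
  have hkey : ((2:ℝ)^n)⁻¹ * (2 * ((4:ℝ)^n * (x - ((2:ℝ)^n)⁻¹))) = 2^(n+1) * (x - ((2:ℝ)^n)⁻¹) := by
    rw [four_pow, pow_succ]
    field_simp
  calc ((2:ℝ)^n)⁻¹ * TT ((4:ℝ)^n * x) ≤ ((2:ℝ)^n)⁻¹ * (2 * ((4:ℝ)^n * (x - ((2:ℝ)^n)⁻¹))) := by
        apply mul_le_mul_of_nonneg_left _ (le_of_lt hq)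
        linarith
    _ = 2^(n+1) * (x - ((2:ℝ)^n)⁻¹) := hkey

lemma hh_le_right {n : ℕ} (hn : 1 ≤ n) {x : ℝ} (h1 : ((2:ℝ)^n)⁻¹ < x)
    (h2 : x ≤ 2 * ((2:ℝ)^n)⁻¹) : hh x ≤ 2^(n+1) * (2 * ((2:ℝ)^n)⁻¹ - x) := by
  rw [hh_eq hn h1 h2]
  have hT := TT_le ((4:ℝ)^n * x) ((2:ℤ)^(n+1))
  have hcast : (((2:ℤ)^(n+1) : ℤ) : ℝ) = (2:ℝ)^(n+1) := by push_cast; ring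
  rw [hcast] at hT
  have hid : |(4:ℝ)^n * x - (2:ℝ)^(n+1)| = (4:ℝ)^n * |x - 2 * ((2:ℝ)^n)⁻¹| := by
    rw [← abs_of_pos (show (0:ℝ) < (4:ℝ)^n by positivity), ← abs_mul]
    congr 1
    rw [four_pow, pow_succ]
    rw [abs_of_pos (show (0:ℝ) < 2^n*2^n by positivity)]
    field_simp
  rw [hid] at hT
  have habs : |x - 2 * ((2:ℝ)^n)⁻¹| = 2 * ((2:ℝ)^n)⁻¹ - x := by
    rw [abs_sub_comm]; exact abs_of_nonneg (by linarith)
  rw [habs] at hT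
  have hq : (0:ℝ) < ((2:ℝ)^n)⁻¹ := by positivity
  have hkey : ((2:ℝ)^n)⁻¹ * (2 * ((4:ℝ)^n * (2 * ((2:ℝ)^n)⁻¹ - x))) = 2^(n+1) * (2 * ((2:ℝ)^n)⁻¹ - x) := by
    rw [four_pow, pow_succ]
    field_simp
  calc ((2:ℝ)^n)⁻¹ * TT ((4:ℝ)^n * x) ≤ ((2:ℝ)^n)⁻¹ * (2 * ((4:ℝ)^n * (2 * ((2:ℝ)^n)⁻¹ - x))) := by
        apply mul_le_mul_of_nonneg_left _ (le_of_lt hq)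
        linarith
    _ = 2^(n+1) * (2 * ((2:ℝ)^n)⁻¹ - x) := hkey

lemma hh_lip_block {n : ℕ} (hn : 1 ≤ n) {x y : ℝ} (hx1 : ((2:ℝ)^n)⁻¹ < x)
    (hx2 : x ≤ 2 * ((2:ℝ)^n)⁻¹) (hy1 : ((2:ℝ)^n)⁻¹ < y) (hy2 : y ≤ 2 * ((2:ℝ)^n)⁻¹) :
    |hh x - hh y| ≤ min (2^(n+1) * |x - y|) (((2:ℝ)^n)⁻¹) := by
  rw [hh_eq hn hx1 hx2, hh_eq hn hy1 hy2]
  have hq : (0:ℝ) < ((2:ℝ)^n)⁻¹ := by positivity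
  rw [← mul_sub, abs_mul, abs_of_pos hq]
  apply le_min
  · have hT := TT_lip ((4:ℝ)^n * x) ((4:ℝ)^n * y)
    have hid : |(4:ℝ)^n * x - (4:ℝ)^n * y| = (4:ℝ)^n * |x - y| := by
      rw [← mul_sub, abs_mul, abs_of_pos (show (0:ℝ) < (4:ℝ)^n by positivity)]
    rw [hid] at hT
    have hkey : ((2:ℝ)^n)⁻¹ * (2 * ((4:ℝ)^n * |x - y|)) = 2^(n+1) * |x - y| := by
      rw [four_pow, pow_succ]
      field_simp
    calc ((2:ℝ)^n)⁻¹ * |TT ((4:ℝ)^n * x) - TT ((4:ℝ)^n * y)|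
        ≤ ((2:ℝ)^n)⁻¹ * (2 * ((4:ℝ)^n * |x - y|)) := by
          apply mul_le_mul_of_nonneg_left hT (le_of_lt hq)
      _ = 2^(n+1) * |x - y| := hkey
  · have h1 := TT_nonneg ((4:ℝ)^n * x)
    have h2 := TT_nonneg ((4:ℝ)^n * y)
    have h3 := TT_le_one ((4:ℝ)^n * x)
    have h4 := TT_le_one ((4:ℝ)^n * y)
    have : |TT ((4:ℝ)^n * x) - TT ((4:ℝ)^n * y)| ≤ 1 := by
      rw [abs_sub_le_iff]; constructor <;> linarith
    nlinarith

lemma hh_zero_outside {x : ℝ} (hx : x ∉ Set.Ioc (0:ℝ) 1) : hh x = 0 := by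
  unfold hh; rw [if_neg hx]

lemma block_sep {m n : ℕ} (h : m < n) : 2 * ((2:ℝ)^n)⁻¹ ≤ ((2:ℝ)^m)⁻¹ := by
  have h1 : (2:ℝ)^(m+1) ≤ 2^n := pow_le_pow_right₀ one_le_two h
  have h2 : ((2:ℝ)^n)⁻¹ ≤ ((2:ℝ)^(m+1))⁻¹ := by
    apply inv_anti₀ (by positivity) h1
  calc 2 * ((2:ℝ)^n)⁻¹ ≤ 2 * ((2:ℝ)^(m+1))⁻¹ := by linarith
    _ = ((2:ℝ)^m)⁻¹ := by rw [pow_succ]; field_simp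

lemma hh_pair_bound_aux {a b : ℝ} (ha : a ∈ Set.Icc (0:ℝ) 2) (hb : b ∈ Set.Icc (0:ℝ) 2)
    (hab : a ≤ b) :
    ∃ k : ℕ, 1 ≤ k ∧ |hh a - hh b| ≤ min (2^(k+1) * |a - b|) (((2:ℝ)^k)⁻¹) := by
  have habs : |a - b| = b - a := by rw [abs_sub_comm]; exact abs_of_nonneg (by linarith)
  by_cases hA : a ∈ Set.Ioc (0:ℝ) 1
  · by_cases hB : b ∈ Set.Ioc (0:ℝ) 1
    · obtain ⟨ha1, ha2⟩ := mem_block a hA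
      obtain ⟨hb1, hb2⟩ := mem_block b hB
      set n := nn a with hn
      set m := nn b with hm
      rcases eq_or_ne n m with he | hne
      · rw [he] at ha1 ha2
        exact ⟨m, one_le_nn b, hh_lip_block (one_le_nn b) ha1 ha2 hb1 hb2⟩
      · have hmn : m < n := by
          by_contra hcon
          push_neg at hcon
          have hlt : n < m := lt_of_le_of_ne hcon hne
          have := block_sep hlt
          linarith
        have hsep : 2 * ((2:ℝ)^n)⁻¹ ≤ ((2:ℝ)^m)⁻¹ := block_sep hmn
        have hbnd_a : hh a ≤ 2^(n+1) * (b - a) := by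
          have := hh_le_right (one_le_nn a) ha1 ha2
          have hp : (0:ℝ) < 2^(n+1) := by positivity
          nlinarith [this, mul_le_mul_of_nonneg_left (show 2 * ((2:ℝ)^n)⁻¹ ≤ b by linarith) (le_of_lt hp)]
        have hbnd_b : hh b ≤ 2^(m+1) * (b - a) := by
          have := hh_le_left (one_le_nn b) hb1 hb2
          have hp : (0:ℝ) < 2^(m+1) := by positivity
          nlinarith [this, mul_le_mul_of_nonneg_left (show a ≤ ((2:ℝ)^m)⁻¹ by linarith) (le_of_lt hp)]
        rcases le_total (hh a) (hh b) with hcase | hcase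
        · refine ⟨m, one_le_nn b, ?_⟩
          rw [habs]
          have h0 := hh_nonneg a
          have htop := hh_le_top (one_le_nn b) hb1 hb2
          rw [abs_sub_comm, abs_of_nonneg (by linarith)]
          exact le_min (by linarith) (by linarith)
        · refine ⟨n, one_le_nn a, ?_⟩
          rw [habs]
          have h0 := hh_nonneg b
          have htop := hh_le_top (one_le_nn a) ha1 ha2
          rw [abs_of_nonneg (by linarith)]
          exact le_min (by linarith) (by linarith)
    · -- b > 1
      obtain ⟨ha1, ha2⟩ := mem_block a hA
      set n := nn a with hn
      have hb1 : 1 < b := by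
        rcases lt_or_ge 1 b with h | h
        · exact h
        · exact absurd ⟨lt_of_lt_of_le hA.1 hab, h⟩ hB
      have hhb : hh b = 0 := hh_zero_outside hB
      refine ⟨n, one_le_nn a, ?_⟩
      rw [habs, hhb, sub_zero, abs_of_nonneg (hh_nonneg a)]
      have hsmall : 2 * ((2:ℝ)^n)⁻¹ ≤ 1 := by
        have h4 : (2:ℝ) ≤ 2^n := by
          calc (2:ℝ) = 2^1 := (pow_one 2).symm
            _ ≤ 2^n := pow_le_pow_right₀ (by norm_num) (one_le_nn a)
        rw [mul_inv_le_iff₀ (by positivity)]; linarith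
      have hbnd_a : hh a ≤ 2^(n+1) * (b - a) := by
        have := hh_le_right (one_le_nn a) ha1 ha2
        have hp : (0:ℝ) < 2^(n+1) := by positivity
        nlinarith [this, mul_le_mul_of_nonneg_left (show 2 * ((2:ℝ)^n)⁻¹ ≤ b by linarith) (le_of_lt hp)]
      exact le_min hbnd_a (hh_le_top (one_le_nn a) ha1 ha2)
  · by_cases hB : b ∈ Set.Ioc (0:ℝ) 1
    · -- a ≤ 0
      obtain ⟨hb1, hb2⟩ := mem_block b hB
      set m := nn b with hm
      have ha0 : a ≤ 0 := by
        by_contra hcon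
        push_neg at hcon
        exact hA ⟨hcon, le_trans hab hB.2⟩
      have hha : hh a = 0 := hh_zero_outside hA
      refine ⟨m, one_le_nn b, ?_⟩
      rw [habs, hha, zero_sub, abs_neg, abs_of_nonneg (hh_nonneg b)]
      have hbnd_b : hh b ≤ 2^(m+1) * (b - a) := by
        have := hh_le_left (one_le_nn b) hb1 hb2
        have hp : (0:ℝ) < 2^(m+1) := by positivity
        have hq : (0:ℝ) < ((2:ℝ)^m)⁻¹ := by positivity
        nlinarith [this, mul_le_mul_of_nonneg_left (show a ≤ ((2:ℝ)^m)⁻¹ by linarith) (le_of_lt hp)]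
      exact le_min hbnd_b (hh_le_top (one_le_nn b) hb1 hb2)
    · refine ⟨1, le_rfl, ?_⟩
      rw [hh_zero_outside hA, hh_zero_outside hB, sub_zero, abs_zero]
      apply le_min (by positivity) (by positivity)

lemma hh_pair_bound {a b : ℝ} (ha : a ∈ Set.Icc (0:ℝ) 2) (hb : b ∈ Set.Icc (0:ℝ) 2) :
    ∃ k : ℕ, 1 ≤ k ∧ |hh a - hh b| ≤ min (2^(k+1) * |a - b|) (((2:ℝ)^k)⁻¹) := by
  rcases le_total a b with h | h
  · exact hh_pair_bound_aux ha hb h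
  · obtain ⟨k, hk, hb'⟩ := hh_pair_bound_aux hb ha h
    exact ⟨k, hk, by rwa [abs_sub_comm (hh a), abs_sub_comm a]⟩

lemma hh_pow_zero {n : ℕ} (hn : 1 ≤ n) : hh ((2:ℝ)^n)⁻¹ = 0 := by
  have h1 : ((2:ℝ)^(n+1))⁻¹ < ((2:ℝ)^n)⁻¹ := by
    apply inv_strictAnti₀ (by positivity)
    apply pow_lt_pow_right₀ (by norm_num) (by omega)
  have h2 : ((2:ℝ)^n)⁻¹ ≤ 2 * ((2:ℝ)^(n+1))⁻¹ := by
    rw [pow_succ, mul_inv]; ring_nf; rfl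
  rw [hh_eq (by omega) h1 h2]
  have harg : (4:ℝ)^(n+1) * ((2:ℝ)^n)⁻¹ = (((2:ℤ)^(n+2) : ℤ) : ℝ) := by
    push_cast
    rw [four_pow, pow_succ, pow_succ, pow_succ]
    field_simp
  rw [harg, TT_int, mul_zero]

lemma hh_tooth {n : ℕ} (hn : 1 ≤ n) (i : ℕ) (hi : i < 2^n) (s : ℝ) (hs0 : 0 ≤ s)
    (hs1 : s ≤ 1/2) (hpos : 0 < (i:ℝ) + s) :
    hh (((2:ℝ)^n)⁻¹ + ((i:ℝ) + s) * ((4:ℝ)^n)⁻¹) = ((2:ℝ)^n)⁻¹ * (2 * s) := by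
  set p := ((2:ℝ)^n)⁻¹ + ((i:ℝ) + s) * ((4:ℝ)^n)⁻¹ with hp
  have h4 : (0:ℝ) < (4:ℝ)^n := by positivity
  have h2p : (0:ℝ) < (2:ℝ)^n := by positivity
  have h1 : ((2:ℝ)^n)⁻¹ < p := by
    have : 0 < ((i:ℝ) + s) * ((4:ℝ)^n)⁻¹ := by positivity
    linarith
  have hile : (i:ℝ) ≤ 2^n - 1 := by
    have : (i:ℝ) + 1 ≤ ((2^n : ℕ) : ℝ) := by exact_mod_cast Nat.succ_le_of_lt hi
    push_cast at this; linarith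
  have h2 : p ≤ 2 * ((2:ℝ)^n)⁻¹ := by
    have key : ((i:ℝ) + s) * ((4:ℝ)^n)⁻¹ ≤ ((2:ℝ)^n)⁻¹ := by
      rw [four_pow]
      have : (i:ℝ) + s ≤ 2^n := by linarith
      rw [mul_inv]
      calc ((i:ℝ) + s) * (((2:ℝ)^n)⁻¹ * ((2:ℝ)^n)⁻¹) ≤ (2:ℝ)^n * (((2:ℝ)^n)⁻¹ * ((2:ℝ)^n)⁻¹) := by
            apply mul_le_mul_of_nonneg_right this (by positivity)
        _ = ((2:ℝ)^n)⁻¹ := by field_simp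
    linarith
  rw [hh_eq hn h1 h2]
  congr 1
  have harg : (4:ℝ)^n * p = (((2^n + i : ℤ) : ℤ) : ℝ) + s := by
    rw [hp, four_pow]
    push_cast
    field_simp
    ring
  rw [harg, TT_int_add _ s hs0 hs1]

def SS (δ : ℝ) : Set ℝ :=
  {d : ℝ | ∃ x ∈ Set.Icc (0:ℝ) 2, ∃ y ∈ Set.Icc (0:ℝ) 2, |x - y| ≤ δ ∧ d = |hh x - hh y|}

lemma modCont_eq_s16 (δ : ℝ) : modCont hh 0 2 δ = sSup (SS δ) := rfl

lemma SS_mem_zero {δ : ℝ} (hδ : 0 ≤ δ) : (0:ℝ) ∈ SS δ := by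
  refine ⟨0, ⟨le_rfl, by norm_num⟩, 0, ⟨le_rfl, by norm_num⟩, by simpa using hδ, by simp⟩

lemma SS_bdd (δ : ℝ) : BddAbove (SS δ) := by
  refine ⟨1, fun d hd => ?_⟩
  obtain ⟨x, hx, y, hy, hxy, rfl⟩ := hd
  obtain ⟨k, hk, hb⟩ := hh_pair_bound hx hy
  have h1 : ((2:ℝ)^k)⁻¹ ≤ 1 := by
    rw [inv_le_one_iff₀]
    right
    exact one_le_pow₀ (by norm_num)
  exact le_trans hb (le_trans (min_le_right _ _) h1)

lemma omega_nonneg {δ : ℝ} (hδ : 0 ≤ δ) : 0 ≤ modCont hh 0 2 δ := by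
  rw [modCont_eq_s16]; exact le_csSup (SS_bdd δ) (SS_mem_zero hδ)

lemma omega_mono_s16 {δ δ' : ℝ} (hδ : 0 ≤ δ) (h : δ ≤ δ') :
    modCont hh 0 2 δ ≤ modCont hh 0 2 δ' := by
  rw [modCont_eq_s16, modCont_eq_s16]
  apply csSup_le_csSup (SS_bdd δ') ⟨0, SS_mem_zero hδ⟩
  rintro d ⟨x, hx, y, hy, hxy, rfl⟩
  exact ⟨x, hx, y, hy, le_trans hxy h, rfl⟩

lemma omega_lower {n : ℕ} (hn : 1 ≤ n) {δ : ℝ} (hδ : 0 ≤ δ) :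
    min (2^(n+1) * δ) (((2:ℝ)^n)⁻¹) ≤ modCont hh 0 2 δ := by
  rw [modCont_eq_s16]
  have h2p : (0:ℝ) < (2:ℝ)^n := by positivity
  have h4p : (0:ℝ) < (4:ℝ)^n := by positivity
  have hn2 : (2:ℝ) ≤ 2^n := by
    calc (2:ℝ) = 2^1 := (pow_one 2).symm
      _ ≤ 2^n := pow_le_pow_right₀ (by norm_num) hn
  have hw : ((2:ℝ)^n)⁻¹ ≤ 1/2 := by
    rw [inv_le_comm₀ h2p (by norm_num)]; linarith
  have h24 : (2:ℝ) ≤ 4^n := by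
    calc (2:ℝ) ≤ 2^n := hn2
      _ ≤ 4^n := by
        apply pow_le_pow_left₀ (by norm_num) (by norm_num)
  have hq4 : ((4:ℝ)^n)⁻¹ ≤ 1/2 := by
    calc ((4:ℝ)^n)⁻¹ ≤ (2:ℝ)⁻¹ := inv_anti₀ (by norm_num) h24
      _ = 1/2 := by norm_num
  have hnp : 0 < 2^n := Nat.pow_pos (by norm_num)
  rcases le_total ((1/2) * ((4:ℝ)^n)⁻¹) δ with hcase | hcase
  · -- full tooth: witness pair ((2^n)⁻¹, (2^n)⁻¹ + (1/2)(4^n)⁻¹)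
    set y0 := ((2:ℝ)^n)⁻¹ + (((0:ℕ):ℝ) + (1/2)) * ((4:ℝ)^n)⁻¹ with hy0
    have hval : hh y0 = ((2:ℝ)^n)⁻¹ * (2 * (1/2)) :=
      hh_tooth hn 0 hnp (1/2) (by norm_num) le_rfl (by norm_num)
    have hmem : (((2:ℝ)^n)⁻¹ : ℝ) ∈ SS δ := by
      refine ⟨((2:ℝ)^n)⁻¹, ⟨by positivity, by linarith⟩, y0, ⟨by positivity, ?_⟩, ?_, ?_⟩
      · rw [hy0]; push_cast
        have : (0 + 1/2) * ((4:ℝ)^n)⁻¹ ≤ 1/2 := by nlinarith [inv_pos.mpr h4p]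
        linarith
      · rw [hy0]
        push_cast
        rw [show ((2:ℝ)^n)⁻¹ - (((2:ℝ)^n)⁻¹ + ((0:ℝ) + 1/2) * ((4:ℝ)^n)⁻¹)
              = -((1/2) * ((4:ℝ)^n)⁻¹) by ring, abs_neg,
           abs_of_pos (show (0:ℝ) < (1/2) * ((4:ℝ)^n)⁻¹ by positivity)]
        linarith
      · rw [hh_pow_zero hn, hval, zero_sub, abs_neg, abs_of_pos (by positivity)]
        norm_num
    calc min (2^(n+1) * δ) (((2:ℝ)^n)⁻¹) ≤ ((2:ℝ)^n)⁻¹ := min_le_right _ _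
      _ ≤ sSup (SS δ) := le_csSup (SS_bdd δ) hmem
  · rcases eq_or_lt_of_le hδ with heq | hpos
    · have : 2^(n+1) * δ = 0 := by rw [← heq]; ring
      calc min (2^(n+1) * δ) (((2:ℝ)^n)⁻¹) ≤ 2^(n+1) * δ := min_le_left _ _
        _ = 0 := this
        _ ≤ sSup (SS δ) := le_csSup (SS_bdd δ) (SS_mem_zero hδ)
    · set s : ℝ := (4:ℝ)^n * δ with hs
      have hs0 : 0 ≤ s := by positivity
      have hs1 : s ≤ 1/2 := by
        rw [hs]
        calc (4:ℝ)^n * δ ≤ (4:ℝ)^n * ((1/2) * ((4:ℝ)^n)⁻¹) := by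
              apply mul_le_mul_of_nonneg_left hcase (le_of_lt h4p)
          _ = 1/2 := by field_simp
      have harg : ((2:ℝ)^n)⁻¹ + δ = ((2:ℝ)^n)⁻¹ + (((0:ℕ):ℝ) + s) * ((4:ℝ)^n)⁻¹ := by
        rw [hs]; push_cast; field_simp; ring
      have hval : hh (((2:ℝ)^n)⁻¹ + δ) = ((2:ℝ)^n)⁻¹ * (2 * s) := by
        rw [harg]
        exact hh_tooth hn 0 hnp s hs0 hs1 (by push_cast; nlinarith)
      have hval2 : ((2:ℝ)^n)⁻¹ * (2 * s) = 2^(n+1) * δ := by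
        rw [hs, four_pow, pow_succ]
        field_simp
      have hmem : (2^(n+1) * δ : ℝ) ∈ SS δ := by
        refine ⟨((2:ℝ)^n)⁻¹, ⟨by positivity, by linarith⟩, ((2:ℝ)^n)⁻¹ + δ, ⟨by positivity, ?_⟩, ?_, ?_⟩
        · have : δ ≤ 1/2 := le_trans hcase (by nlinarith)
          linarith
        · rw [show ((2:ℝ)^n)⁻¹ - (((2:ℝ)^n)⁻¹ + δ) = -δ by ring, abs_neg, abs_of_pos hpos]
        · rw [hh_pow_zero hn, hval, hval2, zero_sub, abs_neg, abs_of_nonneg (by positivity)]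
      calc min (2^(n+1) * δ) (((2:ℝ)^n)⁻¹) ≤ 2^(n+1) * δ := min_le_left _ _
        _ ≤ sSup (SS δ) := le_csSup (SS_bdd δ) hmem

lemma omega_upper {N : ℕ} (hN : 1 ≤ N) {x y : ℝ} (hx : 0 ≤ x) (hxy : x ≤ y) :
    modCont hh 0 2 y ≤ max (modCont hh 0 2 x) (((2:ℝ)^N)⁻¹) + 2^(N+1) * (y - x) := by
  have hy0 : 0 ≤ y := le_trans hx hxy
  have hslack : 0 ≤ (2:ℝ)^(N+1) * (y - x) := mul_nonneg (by positivity) (by linarith)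
  rw [modCont_eq_s16]
  apply csSup_le ⟨0, SS_mem_zero hy0⟩
  rintro d ⟨a, ha, b, hb, hab, rfl⟩
  obtain ⟨k, hk, hbd⟩ := hh_pair_bound ha hb
  rcases le_or_gt N k with hcase | hcase
  · have h1 : ((2:ℝ)^k)⁻¹ ≤ ((2:ℝ)^N)⁻¹ :=
      inv_anti₀ (by positivity) (pow_le_pow_right₀ one_le_two hcase)
    calc |hh a - hh b| ≤ ((2:ℝ)^k)⁻¹ := le_trans hbd (min_le_right _ _)
      _ ≤ ((2:ℝ)^N)⁻¹ := h1
      _ ≤ max (modCont hh 0 2 x) (((2:ℝ)^N)⁻¹) := le_max_right _ _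
      _ ≤ max (modCont hh 0 2 x) (((2:ℝ)^N)⁻¹) + 2^(N+1) * (y - x) :=
          le_add_of_nonneg_right hslack
  · have hkN : k + 1 ≤ N := hcase
    have hpow : (2:ℝ)^(k+1) ≤ 2^(N+1) :=
      pow_le_pow_right₀ one_le_two (by omega)
    have hstep : |hh a - hh b| ≤ min (2^(k+1) * x) (((2:ℝ)^k)⁻¹) + 2^(N+1) * (y - x) := by
      rcases le_total ((2:ℝ)^(k+1) * x) (((2:ℝ)^k)⁻¹) with hmin | hmin
      · rw [min_eq_left hmin]
        have h2 : |hh a - hh b| ≤ 2^(k+1) * |a - b| := le_trans hbd (min_le_left _ _)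
        have h3 : (2:ℝ)^(k+1) * |a - b| ≤ 2^(k+1) * y :=
          mul_le_mul_of_nonneg_left (le_trans hab le_rfl) (by positivity)
        have h4 : (2:ℝ)^(k+1) * (y - x) ≤ 2^(N+1) * (y - x) :=
          mul_le_mul_of_nonneg_right hpow (by linarith)
        nlinarith
      · rw [min_eq_right hmin]
        calc |hh a - hh b| ≤ ((2:ℝ)^k)⁻¹ := le_trans hbd (min_le_right _ _)
          _ ≤ ((2:ℝ)^k)⁻¹ + 2^(N+1) * (y - x) := le_add_of_nonneg_right hslack
    calc |hh a - hh b| ≤ min (2^(k+1) * x) (((2:ℝ)^k)⁻¹) + 2^(N+1) * (y - x) := hstep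
      _ ≤ modCont hh 0 2 x + 2^(N+1) * (y - x) := by
          have := omega_lower hk hx
          linarith
      _ ≤ max (modCont hh 0 2 x) (((2:ℝ)^N)⁻¹) + 2^(N+1) * (y - x) := by
          have := le_max_left (modCont hh 0 2 x) (((2:ℝ)^N)⁻¹)
          linarith

lemma sum_incr_le (u : ℝ → ℝ) (hu : MonotoneOn u (Set.Icc (0:ℝ) 2)) :
    ∀ n (x y : ℕ → ℝ) (b : ℝ), b ∈ Set.Icc (0:ℝ) 2 →
    (∀ i < n, 0 ≤ x i ∧ x i ≤ y i ∧ y i ≤ b) →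
    (∀ i < n, ∀ j < n, i ≠ j → Disjoint (Set.Ioo (x i) (y i)) (Set.Ioo (x j) (y j))) →
    ∑ i ∈ Finset.range n, (u (y i) - u (x i)) ≤ u b - u 0 := by
  intro n
  induction n with
  | zero =>
      intro x y b hb _ _
      simp only [Finset.range_zero, Finset.sum_empty]
      have := hu (Set.mem_Icc.2 ⟨le_rfl, by norm_num⟩) hb hb.1
      linarith
  | succ n ih =>
      intro x y b hb hxy hdisj
      -- normalize degenerate intervals to (0,0)
      set x1 : ℕ → ℝ := fun i => if x i = y i then 0 else x i with hx1
      set y1 : ℕ → ℝ := fun i => if x i = y i then 0 else y i with hy1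
      have hsum1 : ∑ i ∈ Finset.range (n+1), (u (y i) - u (x i))
          = ∑ i ∈ Finset.range (n+1), (u (y1 i) - u (x1 i)) := by
        apply Finset.sum_congr rfl
        intro i _
        by_cases hdeg : x i = y i
        · simp [hx1, hy1, hdeg]
        · simp [hx1, hy1, hdeg]
      have hxy1 : ∀ i < n+1, 0 ≤ x1 i ∧ x1 i ≤ y1 i ∧ y1 i ≤ b := by
        intro i hi
        obtain ⟨h1, h2, h3⟩ := hxy i hi
        by_cases hdeg : x i = y i
        · simp only [hx1, hy1, if_pos hdeg]
          exact ⟨le_rfl, le_rfl, le_trans (le_trans h1 h2) h3⟩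
        · simp only [hx1, hy1, if_neg hdeg]
          exact ⟨h1, h2, h3⟩
      have hIoo : ∀ i, Set.Ioo (x1 i) (y1 i) ⊆ Set.Ioo (x i) (y i) := by
        intro i
        by_cases hdeg : x i = y i
        · simp [hx1, hy1, if_pos hdeg]
        · simp [hx1, hy1, if_neg hdeg]
      have hdisj1 : ∀ i < n+1, ∀ j < n+1, i ≠ j →
          Disjoint (Set.Ioo (x1 i) (y1 i)) (Set.Ioo (x1 j) (y1 j)) := by
        intro i hi j hj hij
        exact Set.disjoint_of_subset (hIoo i) (hIoo j) (hdisj i hi j hj hij)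
      have hdeg1 : ∀ i, x1 i = y1 i → y1 i = 0 := by
        intro i he
        by_cases hdeg : x i = y i
        · simp [hy1, if_pos hdeg]
        · simp only [hx1, hy1, if_neg hdeg] at he
          exact absurd he hdeg
      rw [hsum1]
      -- pick index with maximal y1
      obtain ⟨i₀, hi₀mem, hi₀max⟩ := Finset.exists_max_image (Finset.range (n+1)) y1
        ⟨0, Finset.mem_range.2 (by omega)⟩
      have hi₀ : i₀ < n + 1 := Finset.mem_range.1 hi₀mem
      -- swap i₀ and n
      set e := Equiv.swap i₀ n with he
      have hemapsto : ∀ i < n + 1, e i < n + 1 := by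
        intro i hi
        rcases Equiv.swap_apply_def i₀ n i |>.symm ▸ (rfl : e i = e i) with h
        by_cases h1 : i = i₀
        · simp [he, h1]
        · by_cases h2 : i = n
          · simp [he, h2, hi₀]
          · simp [he, Equiv.swap_apply_of_ne_of_ne h1 h2]; omega
      set x2 : ℕ → ℝ := fun i => x1 (e i) with hx2
      set y2 : ℕ → ℝ := fun i => y1 (e i) with hy2
      have hsum2 : ∑ i ∈ Finset.range (n+1), (u (y1 i) - u (x1 i))
          = ∑ i ∈ Finset.range (n+1), (u (y2 i) - u (x2 i)) := by
        rw [hx2, hy2]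
        apply Finset.sum_nbij' (fun i => e i) (fun i => e i)
        · intro i hi; exact Finset.mem_range.2 (hemapsto i (Finset.mem_range.1 hi))
        · intro i hi; exact Finset.mem_range.2 (hemapsto i (Finset.mem_range.1 hi))
        · intro i _; simp [he, Equiv.swap_apply_self]
        · intro i _; simp [he, Equiv.swap_apply_self]
        · intro i _; simp [he, Equiv.swap_apply_self]
      rw [hsum2]
      have hxy2 : ∀ i < n+1, 0 ≤ x2 i ∧ x2 i ≤ y2 i ∧ y2 i ≤ b := fun i hi =>
        hxy1 (e i) (hemapsto i hi)
      have hdisj2 : ∀ i < n+1, ∀ j < n+1, i ≠ j →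
          Disjoint (Set.Ioo (x2 i) (y2 i)) (Set.Ioo (x2 j) (y2 j)) := by
        intro i hi j hj hij
        exact hdisj1 (e i) (hemapsto i hi) (e j) (hemapsto j hj)
          (fun hc => hij (e.injective hc))
      have hmax2 : ∀ i < n+1, y2 i ≤ y2 n := by
        intro i hi
        have h1 : y2 n = y1 i₀ := by simp [hy2, he]
        rw [h1]
        exact hi₀max (e i) (Finset.mem_range.2 (hemapsto i hi))
      have hdeg2 : ∀ i, x2 i = y2 i → y2 i = 0 := fun i hi => hdeg1 (e i) hi
      -- key: all other intervals below x2 n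
      have hkey : ∀ j < n, y2 j ≤ x2 n := by
        intro j hj
        by_cases hdegj : x2 j = y2 j
        · rw [hdeg2 j hdegj]
          exact (hxy2 n (by omega)).1
        · have hjlt : x2 j < y2 j := lt_of_le_of_ne (hxy2 j (by omega)).2.1 hdegj
          by_cases hdegn : x2 n = y2 n
          · exfalso
            have h0 : y2 n = 0 := hdeg2 n hdegn
            have := hmax2 j (by omega)
            have := (hxy2 j (by omega)).1
            linarith
          · have hnlt : x2 n < y2 n := lt_of_le_of_ne (hxy2 n (by omega)).2.1 hdegn
            by_contra hcon
            push_neg at hcon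
            have hdisjn := hdisj2 j (by omega) n (by omega) (by omega)
            have hymax := hmax2 j (by omega)
            set z := (max (x2 j) (x2 n) + min (y2 j) (y2 n)) / 2 with hz
            have hlt : max (x2 j) (x2 n) < min (y2 j) (y2 n) := by
              rw [max_lt_iff, lt_min_iff, lt_min_iff]
              exact ⟨⟨hjlt, by linarith⟩, ⟨hcon, hnlt⟩⟩
            have hz1 : z ∈ Set.Ioo (x2 j) (y2 j) := by
              constructor
              · have := le_max_left (x2 j) (x2 n); rw [hz]; linarith
              · have := min_le_left (y2 j) (y2 n); rw [hz]; linarith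
            have hz2 : z ∈ Set.Ioo (x2 n) (y2 n) := by
              constructor
              · have := le_max_right (x2 j) (x2 n); rw [hz]; linarith
              · have := min_le_right (y2 j) (y2 n); rw [hz]; linarith
            exact Set.disjoint_left.1 hdisjn hz1 hz2
      -- apply IH with bound x2 n
      have hx2n : x2 n ∈ Set.Icc (0:ℝ) 2 := by
        obtain ⟨h1, h2, h3⟩ := hxy2 n (by omega)
        exact ⟨h1, le_trans (le_trans h2 h3) hb.2⟩
      have hIH := ih x2 y2 (x2 n) hx2n
        (fun i hi => ⟨(hxy2 i (by omega)).1, (hxy2 i (by omega)).2.1, hkey i hi⟩)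
        (fun i hi j hj hij => hdisj2 i (by omega) j (by omega) hij)
      rw [Finset.sum_range_succ]
      have hlast : u (y2 n) - u 0 ≤ u b - u 0 := by
        have hy2n : y2 n ∈ Set.Icc (0:ℝ) 2 := by
          obtain ⟨h1, h2, h3⟩ := hxy2 n (by omega)
          exact ⟨le_trans h1 h2, le_trans h3 hb.2⟩
        have := hu hy2n hb (hxy2 n (by omega)).2.2
        linarith
      linarith

lemma hh_contOn : ContinuousOn hh (Set.Icc (0:ℝ) 2) := by
  rw [Metric.continuousOn_iff]
  intro b hb ε hε
  refine ⟨ε^2/2, by positivity, ?_⟩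
  intro a ha hdist
  rw [Real.dist_eq] at hdist ⊢
  obtain ⟨k, hk, hbd⟩ := hh_pair_bound ha hb
  have hid : (2:ℝ)^(k+1) * (((2:ℝ)^k)⁻¹) = 2 := by
    rw [pow_succ]; field_simp
  have hmin0 : 0 ≤ min (2^(k+1) * |a - b|) (((2:ℝ)^k)⁻¹) :=
    le_min (by positivity) (by positivity)
  have hsq : (min (2^(k+1) * |a - b|) (((2:ℝ)^k)⁻¹))^2 ≤ 2 * |a - b| := by
    have h1 : min (2^(k+1) * |a - b|) (((2:ℝ)^k)⁻¹) ≤ 2^(k+1) * |a - b| := min_le_left _ _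
    have h2 : min (2^(k+1) * |a - b|) (((2:ℝ)^k)⁻¹) ≤ ((2:ℝ)^k)⁻¹ := min_le_right _ _
    calc (min (2^(k+1) * |a - b|) (((2:ℝ)^k)⁻¹))^2
        ≤ (2^(k+1) * |a - b|) * (((2:ℝ)^k)⁻¹) := by
          rw [sq]
          apply mul_le_mul h1 h2 hmin0 (by positivity)
      _ = 2 * |a - b| := by rw [mul_comm (2^(k+1)) (|a - b|), mul_assoc, hid, mul_comm]
  have hle : |hh a - hh b| ≤ Real.sqrt (2 * |a - b|) :=
    le_trans hbd ((Real.le_sqrt hmin0 (by positivity)).2 hsq)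
  calc |hh a - hh b| ≤ Real.sqrt (2 * |a - b|) := hle
    _ < Real.sqrt (ε^2) := Real.sqrt_lt_sqrt (by positivity) (by linarith)
    _ = ε := Real.sqrt_sq (le_of_lt hε)

lemma hh_half : hh (1/2 : ℝ) = 0 := by
  have h : ((2:ℝ)^1)⁻¹ = 1/2 := by norm_num
  rw [← h]; exact hh_pow_zero le_rfl

lemma hh_fiveeighths : hh (5/8 : ℝ) = 1/2 := by
  have harg : ((2:ℝ)^1)⁻¹ + (((0:ℕ):ℝ) + 1/2) * ((4:ℝ)^1)⁻¹ = 5/8 := by norm_num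
  rw [← harg, hh_tooth le_rfl 0 (by norm_num) (1/2) (by norm_num) le_rfl (by norm_num)]
  norm_num

lemma hh_one : hh (1 : ℝ) = 0 := by
  have h1 : ((2:ℝ)^1)⁻¹ < 1 := by norm_num
  have h2 : (1:ℝ) ≤ 2 * ((2:ℝ)^1)⁻¹ := by norm_num
  rw [hh_eq le_rfl h1 h2]
  have : (4:ℝ)^1 * 1 = (((4:ℤ)):ℝ) := by norm_num
  rw [this, TT_int, mul_zero]

lemma half_pow_eq (k : ℕ) : ((1:ℝ)/2)^k = ((2:ℝ)^k)⁻¹ := by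
  rw [one_div, inv_pow]

lemma hh_not_AC : ¬ AbsolutelyContinuousOn hh 0 2 := by
  intro hAC
  obtain ⟨δ, hδ, H⟩ := hAC (1/2) (by norm_num)
  obtain ⟨n0, hn0⟩ := exists_pow_lt_of_lt_one hδ (by norm_num : (1:ℝ)/2 < 1)
  set N := n0 + 1 with hNdef
  have hN1 : 1 ≤ N := by omega
  set q : ℝ := ((4:ℝ)^N)⁻¹ with hq
  have hqpos : 0 < q := by rw [hq]; positivity
  have h2pos : (0:ℝ) < ((2:ℝ)^N)⁻¹ := by positivity
  set xf : ℕ → ℝ := fun i => ((2:ℝ)^N)⁻¹ + (i:ℝ) * q with hxf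
  set yf : ℕ → ℝ := fun i => ((2:ℝ)^N)⁻¹ + ((i:ℝ) + 1/2) * q with hyf
  set K := 2^N with hK
  have hile : ∀ i : ℕ, i < K → (i:ℝ) + 1/2 ≤ (2:ℝ)^N := by
    intro i hi
    have : (i:ℝ) + 1 ≤ ((K:ℕ):ℝ) := by exact_mod_cast Nat.succ_le_of_lt hi
    rw [hK] at this; push_cast at this; linarith
  have hc1 : ∀ i < K, (0:ℝ) ≤ xf i ∧ xf i ≤ yf i ∧ yf i ≤ 2 := by
    intro i hi
    refine ⟨by rw [hxf]; positivity, ?_, ?_⟩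
    · rw [hxf, hyf]
      simp only []
      nlinarith [hqpos]
    · rw [hyf]
      have h1 : ((i:ℝ) + 1/2) * q ≤ (2:ℝ)^N * q :=
        mul_le_mul_of_nonneg_right (hile i hi) (le_of_lt hqpos)
      have h2 : (2:ℝ)^N * q = ((2:ℝ)^N)⁻¹ := by
        rw [hq, four_pow]
        field_simp
      have h3 : ((2:ℝ)^N)⁻¹ ≤ 1 := by
        rw [inv_le_one_iff₀]; right; exact one_le_pow₀ (by norm_num)
      simp only []
      linarith
  have hc2 : ∀ i < K, ∀ j < K, i ≠ j →
      Disjoint (Set.Ioo (xf i) (yf i)) (Set.Ioo (xf j) (yf j)) := by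
    have horder : ∀ i j : ℕ, i < j → Disjoint (Set.Ioo (xf i) (yf i)) (Set.Ioo (xf j) (yf j)) := by
      intro i j hij
      have hle : yf i ≤ xf j := by
        rw [hxf, hyf]
        simp only []
        have : (i:ℝ) + 1 ≤ (j:ℝ) := by exact_mod_cast hij
        nlinarith [hqpos]
      rw [Set.disjoint_left]
      intro z hz1 hz2
      exact absurd (lt_trans hz1.2 (lt_of_le_of_lt hle hz2.1)) (lt_irrefl z)
    intro i _ j _ hij
    rcases lt_or_gt_of_ne hij with h | h
    · exact horder i j h
    · exact (horder j i h).symm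
  have hc3 : ∑ i ∈ Finset.range K, (yf i - xf i) < δ := by
    have hterm : ∀ i ∈ Finset.range K, yf i - xf i = (1/2) * q := by
      intro i _
      rw [hxf, hyf]; ring
    rw [Finset.sum_congr rfl hterm, Finset.sum_const, Finset.card_range, nsmul_eq_mul]
    have hval : (K:ℝ) * ((1/2) * q) = ((2:ℝ)^(N+1))⁻¹ := by
      rw [hK, hq, four_pow]
      push_cast
      rw [pow_succ]
      field_simp
      ring
    rw [hval]
    calc ((2:ℝ)^(N+1))⁻¹ ≤ ((2:ℝ)^n0)⁻¹ := by
          apply inv_anti₀ (by positivity)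
          apply pow_le_pow_right₀ one_le_two (by omega)
      _ = ((1:ℝ)/2)^n0 := (half_pow_eq n0).symm
      _ < δ := hn0
  have hvals : ∀ i < K, |hh (yf i) - hh (xf i)| = ((2:ℝ)^N)⁻¹ := by
    intro i hi
    have hyval : hh (yf i) = ((2:ℝ)^N)⁻¹ := by
      have harg : yf i = ((2:ℝ)^N)⁻¹ + ((i:ℝ) + 1/2) * ((4:ℝ)^N)⁻¹ := by rw [hyf, hq]
      rw [harg, hh_tooth hN1 i (by rw [hK] at hi; exact hi) (1/2) (by norm_num) le_rfl
        (by positivity)]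
      norm_num
    have hxval : hh (xf i) = 0 := by
      rcases Nat.eq_zero_or_pos i with h0 | hpos
      · have harg : xf i = ((2:ℝ)^N)⁻¹ := by rw [hxf, h0]; push_cast; ring
        rw [harg]; exact hh_pow_zero hN1
      · have harg : xf i = ((2:ℝ)^N)⁻¹ + ((i:ℝ) + 0) * ((4:ℝ)^N)⁻¹ := by rw [hxf, hq]; ring
        rw [harg, hh_tooth hN1 i (by rw [hK] at hi; exact hi) 0 le_rfl (by norm_num)
          (by push_cast; exact_mod_cast lt_of_lt_of_le hpos (le_of_eq (by push_cast; ring)))]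
        ring
    rw [hyval, hxval, sub_zero, abs_of_pos h2pos]
  have hsumvar : ∑ i ∈ Finset.range K, |hh (yf i) - hh (xf i)| = 1 := by
    have : ∀ i ∈ Finset.range K, |hh (yf i) - hh (xf i)| = ((2:ℝ)^N)⁻¹ := by
      intro i hi; exact hvals i (Finset.mem_range.1 hi)
    rw [Finset.sum_congr rfl this, Finset.sum_const, Finset.card_range, nsmul_eq_mul, hK]
    push_cast
    field_simp
  have := H K xf yf hc1 hc2 hc3
  rw [hsumvar] at this
  norm_num at this

lemma min_max_split (a c : ℝ) : min a c + max (a - c) 0 = a := by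
  rcases le_total a c with h | h
  · rw [min_eq_left h, max_eq_right (by linarith)]; ring
  · rw [min_eq_right h, max_eq_left (by linarith)]; ring

lemma max_sub_max (a b c C : ℝ) (hC : 0 ≤ C) (h : a ≤ max b c + C) :
    max (a - c) 0 ≤ max (b - c) 0 + C := by
  rcases le_total (a - c) 0 with h1 | h1
  · rw [max_eq_right h1]
    have := le_max_right (b - c) 0
    linarith
  · rw [max_eq_left h1]
    rcases le_total b c with h2 | h2
    · rw [max_eq_right (by linarith)]
      rw [max_eq_right h2] at h
      linarith
    · rw [max_eq_left (by linarith)]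
      rw [max_eq_left h2] at h
      linarith

lemma omega_AC_s16 : AbsolutelyContinuousOn (modCont hh 0 2) 0 2 := by
  intro ε hε
  obtain ⟨N0, hN0⟩ := exists_pow_lt_of_lt_one (show (0:ℝ) < ε/2 by linarith)
    (by norm_num : (1:ℝ)/2 < 1)
  set N := N0 + 1 with hNdef
  have hN1 : 1 ≤ N := by omega
  set c : ℝ := ((2:ℝ)^N)⁻¹ with hc
  have hcpos : 0 < c := by rw [hc]; positivity
  have hcsmall : c < ε/2 := by
    calc c = ((2:ℝ)^N)⁻¹ := hc
      _ ≤ ((2:ℝ)^N0)⁻¹ := by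
          apply inv_anti₀ (by positivity)
          apply pow_le_pow_right₀ one_le_two (by omega)
      _ = ((1:ℝ)/2)^N0 := (half_pow_eq N0).symm
      _ < ε/2 := hN0
  set C : ℝ := (2:ℝ)^(N+1) with hC
  have hCpos : 0 < C := by rw [hC]; positivity
  refine ⟨(ε/2)/C, by positivity, ?_⟩
  intro n x y hmem hdisj hlen
  set ω : ℝ → ℝ := modCont hh 0 2 with hω
  set u : ℝ → ℝ := fun t => min (ω t) c with hu
  set v : ℝ → ℝ := fun t => max (ω t - c) 0 with hv
  have humono : MonotoneOn u (Set.Icc (0:ℝ) 2) := by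
    intro a ha b hb hab
    exact min_le_min (omega_mono_s16 ha.1 hab) le_rfl
  have hsplit : ∀ t : ℝ, ω t = u t + v t := by
    intro t; rw [hu, hv]; simp only []; rw [min_max_split]
  have habs : ∀ i < n, |ω (y i) - ω (x i)| = (u (y i) - u (x i)) + (v (y i) - v (x i)) := by
    intro i hi
    obtain ⟨h1, h2, h3⟩ := hmem i hi
    have hmono := omega_mono_s16 h1 h2
    rw [abs_of_nonneg (by linarith), hsplit (y i), hsplit (x i)]
    ring
  have hsum : ∑ i ∈ Finset.range n, |ω (y i) - ω (x i)|
      = ∑ i ∈ Finset.range n, (u (y i) - u (x i))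
        + ∑ i ∈ Finset.range n, (v (y i) - v (x i)) := by
    rw [← Finset.sum_add_distrib]
    apply Finset.sum_congr rfl
    intro i hi
    exact habs i (Finset.mem_range.1 hi)
  have hub : ∑ i ∈ Finset.range n, (u (y i) - u (x i)) ≤ c := by
    have := sum_incr_le u humono n x y 2 ⟨by norm_num, le_rfl⟩ hmem hdisj
    have hu2 : u 2 ≤ c := min_le_right _ _
    have hu0 : 0 ≤ u 0 := le_min (omega_nonneg le_rfl) (le_of_lt hcpos)
    linarith
  have hvb : ∑ i ∈ Finset.range n, (v (y i) - v (x i))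
      ≤ C * ∑ i ∈ Finset.range n, (y i - x i) := by
    rw [Finset.mul_sum]
    apply Finset.sum_le_sum
    intro i hi
    obtain ⟨h1, h2, h3⟩ := hmem i (Finset.mem_range.1 hi)
    have hup := omega_upper hN1 h1 h2
    have hslack : 0 ≤ C * (y i - x i) := mul_nonneg (le_of_lt hCpos) (by linarith)
    have := max_sub_max (ω (y i)) (ω (x i)) c (C * (y i - x i)) hslack
      (by rw [hω, hc, hC] at *; exact hup)
    rw [hv]
    simp only []
    linarith
  have hlen' : C * ∑ i ∈ Finset.range n, (y i - x i) < C * ((ε/2)/C) :=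
    mul_lt_mul_of_pos_left hlen hCpos
  have hCC : C * ((ε/2)/C) = ε/2 := by field_simp
  rw [hsum]
  calc (∑ i ∈ Finset.range n, (u (y i) - u (x i)))
      + ∑ i ∈ Finset.range n, (v (y i) - v (x i))
      ≤ c + C * ∑ i ∈ Finset.range n, (y i - x i) := by linarith
    _ < ε/2 + ε/2 := by rw [hCC] at hlen'; linarith
    _ = ε := by ring

theorem stmt16 :
    ∃ h : ℝ → ℝ,
      ContinuousOn h (Set.Icc 0 2) ∧
      ¬ MonotoneOn h (Set.Icc 0 2) ∧
      ¬ AntitoneOn h (Set.Icc 0 2) ∧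
      ¬ AbsolutelyContinuousOn h 0 2 ∧
      AbsolutelyContinuousOn (modCont h 0 2) 0 2 := by
  refine ⟨hh, hh_contOn, ?_, ?_, hh_not_AC, omega_AC_s16⟩
  · intro hmono
    have h1 : hh (5/8) ≤ hh 1 :=
      hmono ⟨by norm_num, by norm_num⟩ ⟨by norm_num, by norm_num⟩ (by norm_num)
    rw [hh_fiveeighths, hh_one] at h1
    norm_num at h1
  · intro hanti
    have h1 : hh (5/8) ≤ hh (1/2) :=
      hanti ⟨by norm_num, by norm_num⟩ ⟨by norm_num, by norm_num⟩ (by norm_num)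
    rw [hh_fiveeighths, hh_half] at h1
    norm_num at h1
end

section
/- The minimal modulus of continuity of the Cantor function c on [0,1] is c itself: ω_c(δ) = c(δ) for every δ ∈ [0,1]. -/
section Aux

variable {c : ℝ → ℝ}

lemma cantor_nonneg (hc : IsCantorFunction c) {x : ℝ} (h0 : 0 ≤ x) (h1 : x ≤ 1) :
    0 ≤ c x := by
  have := hc.1 (Set.mem_Icc.2 ⟨le_refl 0, zero_le_one⟩) (Set.mem_Icc.2 ⟨h0, h1⟩) h0
  rw [hc.2.1] at this; exact this

lemma cantor_le_one (hc : IsCantorFunction c) {x : ℝ} (h0 : 0 ≤ x) (h1 : x ≤ 1) :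
    c x ≤ 1 := by
  have := hc.1 (Set.mem_Icc.2 ⟨h0, h1⟩) (Set.mem_Icc.2 ⟨zero_le_one, le_refl 1⟩) h1
  rw [hc.2.2.1] at this; exact this

lemma cantor_mono (hc : IsCantorFunction c) {x y : ℝ} (h0 : 0 ≤ x) (hxy : x ≤ y)
    (h1 : y ≤ 1) : c x ≤ c y :=
  hc.1 (Set.mem_Icc.2 ⟨h0, le_trans hxy h1⟩) (Set.mem_Icc.2 ⟨le_trans h0 hxy, h1⟩) hxy

lemma cantor_scale₁ (hc : IsCantorFunction c) {w : ℝ} (h0 : 0 ≤ w) (h1 : w ≤ 1/3) :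
    c w = c (3*w) / 2 := by
  have := hc.2.2.2.1 (3*w) (Set.mem_Icc.2 ⟨by linarith, by linarith⟩)
  rw [show 3*w/3 = w by ring] at this; exact this

lemma cantor_scale₂ (hc : IsCantorFunction c) {w : ℝ} (h0 : 2/3 ≤ w) (h1 : w ≤ 1) :
    c w = (1 + c (3*w - 2)) / 2 := by
  have := hc.2.2.2.2 (3*w - 2) (Set.mem_Icc.2 ⟨by linarith, by linarith⟩)
  rw [show (3*w - 2 + 2)/3 = w by ring] at this; exact this

lemma cantor_mid (hc : IsCantorFunction c) {w : ℝ} (h0 : 1/3 ≤ w) (h1 : w ≤ 2/3) :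
    c w = 1/2 := by
  have e13 : c (1/3 : ℝ) = 1/2 := by
    have := cantor_scale₁ hc (by norm_num : (0:ℝ) ≤ 1/3) (le_refl _)
    rw [show (3:ℝ)*(1/3) = 1 by norm_num, hc.2.2.1] at this
    linarith
  have e23 : c (2/3 : ℝ) = 1/2 := by
    have := cantor_scale₂ hc (le_refl (2/3:ℝ)) (by norm_num)
    rw [show (3:ℝ)*(2/3) - 2 = 0 by norm_num, hc.2.1] at this
    linarith
  have h₁ := cantor_mono hc (by norm_num : (0:ℝ) ≤ 1/3) h0 (by linarith)
  have h₂ := cantor_mono hc (by linarith : (0:ℝ) ≤ w) h1 (by norm_num)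
  rw [e13] at h₁; rw [e23] at h₂; linarith

lemma cantor_sym_aux (hc : IsCantorFunction c) :
    ∀ n : ℕ, ∀ u : ℝ, 0 ≤ u → u ≤ 1 → |c u + c (1 - u) - 1| ≤ (1/2 : ℝ)^n := by
  intro n
  induction n with
  | zero =>
    intro u h0 h1
    have b1 := cantor_nonneg hc h0 h1
    have b2 := cantor_le_one hc h0 h1
    have b3 := cantor_nonneg hc (by linarith : (0:ℝ) ≤ 1 - u) (by linarith)
    have b4 := cantor_le_one hc (by linarith : (0:ℝ) ≤ 1 - u) (by linarith)
    rw [abs_le]; constructor <;> simp <;> linarith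
  | succ n ih =>
    intro u h0 h1
    rcases le_or_gt u (1/3) with hu | hu
    · have e1 : c u = c (3*u) / 2 := cantor_scale₁ hc h0 hu
      have e2 : c (1 - u) = (1 + c (3*(1-u) - 2)) / 2 :=
        cantor_scale₂ hc (by linarith) (by linarith)
      have e3 : 3*(1-u) - 2 = 1 - 3*u := by ring
      rw [e3] at e2
      have key := ih (3*u) (by linarith) (by linarith)
      rw [e1, e2]
      rw [show c (3*u) / 2 + (1 + c (1 - 3*u)) / 2 - 1
          = (c (3*u) + c (1 - 3*u) - 1) / 2 by ring, abs_div]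
      rw [show |(2:ℝ)| = 2 by norm_num]
      rw [pow_succ]
      linarith
    rcases le_or_gt u (2/3) with hu2 | hu2
    · have e1 : c u = 1/2 := cantor_mid hc (le_of_lt hu) hu2
      have e2 : c (1 - u) = 1/2 := cantor_mid hc (by linarith) (by linarith)
      rw [e1, e2, show ((1:ℝ)/2 + 1/2 - 1) = 0 by norm_num, abs_zero]
      positivity
    · have e1 : c u = (1 + c (3*u - 2)) / 2 := cantor_scale₂ hc (le_of_lt hu2) h1
      have e2 : c (1 - u) = c (3*(1-u)) / 2 := cantor_scale₁ hc (by linarith) (by linarith)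
      have e3 : 3*(1-u) = 1 - (3*u - 2) := by ring
      rw [e3] at e2
      have key := ih (3*u - 2) (by linarith) (by linarith)
      rw [e1, e2]
      rw [show (1 + c (3*u - 2)) / 2 + c (1 - (3*u - 2)) / 2 - 1
          = (c (3*u - 2) + c (1 - (3*u - 2)) - 1) / 2 by ring, abs_div]
      rw [show |(2:ℝ)| = 2 by norm_num]
      rw [pow_succ]
      linarith

lemma cantor_sym (hc : IsCantorFunction c) {u : ℝ} (h0 : 0 ≤ u) (h1 : u ≤ 1) :
    c (1 - u) = 1 - c u := by
  by_contra h
  have hpos : 0 < |c u + c (1 - u) - 1| := by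
    rw [abs_pos]
    intro h'
    exact h (by linarith)
  obtain ⟨n, hn⟩ := exists_pow_lt_of_lt_one hpos (by norm_num : (1/2 : ℝ) < 1)
  exact absurd (cantor_sym_aux hc n u h0 h1) (not_le.2 hn)

lemma cantor_sub_aux (hc : IsCantorFunction c) :
    ∀ n : ℕ, ∀ x y : ℝ, 0 ≤ x → x ≤ y → y ≤ 1 →
      c y - c x ≤ c (y - x) + (1/2 : ℝ)^n := by
  intro n
  induction n with
  | zero =>
    intro x y h0 hxy h1
    have b1 := cantor_nonneg hc h0 (le_trans hxy h1)
    have b2 := cantor_le_one hc (le_trans h0 hxy) h1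
    have b3 := cantor_nonneg hc (by linarith : (0:ℝ) ≤ y - x) (by linarith)
    simp; linarith
  | succ n ih =>
    intro x y h0 hxy h1
    have hp : (0:ℝ) < (1/2 : ℝ)^(n+1) := by positivity
    rcases le_or_gt y (1/3) with hy | hy
    · -- A : both in [0,1/3]
      have ex : c x = c (3*x) / 2 := cantor_scale₁ hc h0 (le_trans hxy hy)
      have ey : c y = c (3*y) / 2 := cantor_scale₁ hc (le_trans h0 hxy) hy
      have ed : c (y - x) = c (3*(y-x)) / 2 :=
        cantor_scale₁ hc (by linarith) (by linarith)
      have key := ih (3*x) (3*y) (by linarith) (by linarith) (by linarith)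
      rw [show 3*y - 3*x = 3*(y-x) by ring] at key
      rw [ex, ey, ed, pow_succ]; linarith
    rcases le_or_gt y (2/3) with hy2 | hy2
    · rcases le_or_gt (1/3) x with hx | hx
      · -- C : both in middle
        have ex := cantor_mid hc hx (le_trans hxy hy2)
        have ey := cantor_mid hc (le_trans hx hxy) hy2
        have b3 := cantor_nonneg hc (by linarith : (0:ℝ) ≤ y - x) (by linarith)
        rw [ex, ey]; linarith
      · -- D : x ≤ 1/3 ≤ y ≤ 2/3
        have ey := cantor_mid hc (le_of_lt hy) hy2
        have ex : c x = c (3*x) / 2 := cantor_scale₁ hc h0 (le_of_lt hx)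
        have ed : c (1/3 - x) = c (3*(1/3 - x)) / 2 :=
          cantor_scale₁ hc (by linarith) (by linarith)
        rw [show 3*(1/3 - x) = 1 - 3*x by ring,
          cantor_sym hc (by linarith : (0:ℝ) ≤ 3*x) (by linarith)] at ed
        have hmono : c (1/3 - x) ≤ c (y - x) :=
          cantor_mono hc (by linarith) (by linarith) (by linarith)
        rw [ey, ex]; linarith
    · rcases le_or_gt (2/3) x with hx | hx
      · -- B : both in [2/3,1]
        have ex : c x = (1 + c (3*x - 2)) / 2 := cantor_scale₂ hc hx (le_trans hxy h1)
        have ey : c y = (1 + c (3*y - 2)) / 2 := cantor_scale₂ hc (le_trans hx hxy) h1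
        have ed : c (y - x) = c (3*(y-x)) / 2 :=
          cantor_scale₁ hc (by linarith) (by linarith)
        have key := ih (3*x - 2) (3*y - 2) (by linarith) (by linarith) (by linarith)
        rw [show 3*y - 2 - (3*x - 2) = 3*(y-x) by ring] at key
        rw [ex, ey, ed, pow_succ]; linarith
      rcases le_or_gt (1/3) x with hx1 | hx1
      · -- E : 1/3 ≤ x ≤ 2/3 ≤ y
        have ex := cantor_mid hc hx1 (le_of_lt hx)
        have ey : c y = (1 + c (3*y - 2)) / 2 := cantor_scale₂ hc (le_of_lt hy2) h1
        have ed : c (y - 2/3) = c (3*(y - 2/3)) / 2 :=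
          cantor_scale₁ hc (by linarith) (by linarith)
        rw [show 3*(y - 2/3) = 3*y - 2 by ring] at ed
        have hmono : c (y - 2/3) ≤ c (y - x) :=
          cantor_mono hc (by linarith) (by linarith) (by linarith)
        rw [ex, ey]; linarith
      rcases le_or_gt (y - x) (2/3) with hd | hd
      · -- F : x ≤ 1/3, 2/3 ≤ y, y - x ≤ 2/3
        have ex : c x = c (3*x) / 2 := cantor_scale₁ hc h0 (le_of_lt hx1)
        have ey : c y = (1 + c (3*y - 2)) / 2 := cantor_scale₂ hc (le_of_lt hy2) h1
        have ed : c (y - x) = 1/2 := cantor_mid hc (by linarith) hd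
        have hmono : c (3*y - 2) ≤ c (3*x) :=
          cantor_mono hc (by linarith) (by linarith) (by linarith)
        rw [ex, ey, ed]; linarith
      · -- G : x ≤ 1/3, 2/3 ≤ y, y - x > 2/3
        have ex : c x = c (3*x) / 2 := cantor_scale₁ hc h0 (le_of_lt hx1)
        have ey : c y = (1 + c (3*y - 2)) / 2 := cantor_scale₂ hc (le_of_lt hy2) h1
        have ed : c (y - x) = (1 + c (3*(y-x) - 2)) / 2 :=
          cantor_scale₂ hc (by linarith) (by linarith)
        have key := ih (3*x) (3*y - 2) (by linarith) (by linarith) (by linarith)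
        rw [show 3*y - 2 - 3*x = 3*(y-x) - 2 by ring] at key
        rw [ex, ey, ed, pow_succ]; linarith

lemma cantor_sub (hc : IsCantorFunction c) {x y : ℝ} (h0 : 0 ≤ x) (hxy : x ≤ y)
    (h1 : y ≤ 1) : c y - c x ≤ c (y - x) := by
  by_contra h
  push_neg at h
  obtain ⟨n, hn⟩ := exists_pow_lt_of_lt_one (by linarith : (0:ℝ) < c y - c x - c (y - x))
    (by norm_num : (1/2 : ℝ) < 1)
  have := cantor_sub_aux hc n x y h0 hxy h1
  linarith

end Aux

theorem stmt18 (c : ℝ → ℝ) (hc : IsCantorFunction c) :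
    ∀ δ ∈ Set.Icc (0:ℝ) 1, modCont c 0 1 δ = c δ := by
  intro δ hδ
  obtain ⟨hδ0, hδ1⟩ := hδ
  have hub : ∀ d ∈ {d : ℝ | ∃ x ∈ Set.Icc (0:ℝ) 1, ∃ y ∈ Set.Icc (0:ℝ) 1,
      |x - y| ≤ δ ∧ d = |c x - c y|}, d ≤ c δ := by
    rintro d ⟨x, ⟨hx0, hx1⟩, y, ⟨hy0, hy1⟩, hxy, rfl⟩
    have main : ∀ a b : ℝ, 0 ≤ a → a ≤ b → b ≤ 1 → b - a ≤ δ → |c a - c b| ≤ c δ := by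
      intro a b ha hab hb hd
      have h₁ : c a ≤ c b := cantor_mono hc ha hab hb
      rw [abs_sub_comm, abs_of_nonneg (by linarith)]
      have h₂ : c b - c a ≤ c (b - a) := cantor_sub hc ha hab hb
      have h₃ : c (b - a) ≤ c δ := cantor_mono hc (by linarith) hd hδ1
      linarith
    rcases le_total x y with h | h
    · have := main x y hx0 h hy1 (by rw [abs_sub_comm, abs_of_nonneg (by linarith)] at hxy; linarith)
      exact this
    · have := main y x hy0 h hx1 (by rw [abs_of_nonneg (by linarith)] at hxy; linarith)
      rw [abs_sub_comm]; exact this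
  have hmem : c δ ∈ {d : ℝ | ∃ x ∈ Set.Icc (0:ℝ) 1, ∃ y ∈ Set.Icc (0:ℝ) 1,
      |x - y| ≤ δ ∧ d = |c x - c y|} := by
    refine ⟨δ, ⟨hδ0, hδ1⟩, 0, ⟨le_refl 0, zero_le_one⟩, ?_, ?_⟩
    · rw [sub_zero, abs_of_nonneg hδ0]
    · rw [hc.2.1, sub_zero, abs_of_nonneg (cantor_nonneg hc hδ0 hδ1)]
  unfold modCont
  exact le_antisymm (csSup_le ⟨c δ, hmem⟩ hub) (le_csSup ⟨c δ, hub⟩ hmem)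
end
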